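/- arXiv:2505.01971 — 5 statements merged into one kernel-verified Lean document; each statement's English description precedes it below -/
import Mathlib

section
/- Let n ≥ 2 and let a = (a_1, …, a_n) be any vector of real numbers. If the random vector X has the permutation distribution on a (i.e., X = (a_{π(1)}, …, a_{π(n)}) for a uniformly random permutation π of {1,…,n}), then X is negatively regression dependent (NRD): for all disjoint subsets I, J of {1,…,n} and all vectors x_J ≤ x_J* componentwise such that both conditioning events have positive probability, [X_I | X_J = x_J] ≥_st [X_I | X_J = x_J*]. -/
open scoped Classical
open Finset

noncomputable section

/-- Probability of the event `A` on a finite sample space with weights `w`. -/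
def Pr {Ω : Type*} [Fintype Ω] (w : Ω → ℝ) (A : Ω → Prop) : ℝ :=
  ∑ ω : Ω, if A ω then w ω else 0

/-- Expectation of `f` on a finite sample space with weights `w`. -/
def Expec {Ω : Type*} [Fintype Ω] (w : Ω → ℝ) (f : Ω → ℝ) : ℝ :=
  ∑ ω : Ω, w ω * f ω

/-- Conditional expectation of `f` given the event `A` under weights `w`. -/
def CExp {Ω : Type*} [Fintype Ω] (w : Ω → ℝ) (A : Ω → Prop) (f : Ω → ℝ) : ℝ :=
  (∑ ω : Ω, if A ω then w ω * f ω else 0) / Pr w A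

/-- `[X_I | A] ≤_st [X_I | B]` : the conditional distribution of the subvector `X_I`
given the event `A` is dominated, in the usual stochastic order, by the conditional
distribution of `X_I` given `B`; i.e. conditional expectations of every bounded
coordinatewise increasing function compare. -/
def CondSubvecStochLE {Ω : Type*} [Fintype Ω] {n : ℕ} (w : Ω → ℝ)
    (X : Ω → Fin n → ℝ) (I : Finset (Fin n)) (A B : Ω → Prop) : Prop :=
  ∀ φ : ({i : Fin n // i ∈ I} → ℝ) → ℝ, Monotone φ → (∃ C, ∀ v, |φ v| ≤ C) →
    CExp w A (fun ω => φ fun i => X ω i.1) ≤ CExp w B (fun ω => φ fun i => X ω i.1)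

/-- Negative regression dependence: `[X_I | X_J = x_J] ≥_st [X_I | X_J = x_J*]`
whenever `x_J ≤ x_J*` componentwise and both conditioning events have
positive probability. -/
def IsNRD {Ω : Type*} [Fintype Ω] {n : ℕ} (w : Ω → ℝ) (X : Ω → Fin n → ℝ) : Prop :=
  ∀ I J : Finset (Fin n), Disjoint I J → ∀ x y : Fin n → ℝ, (∀ j ∈ J, x j ≤ y j) →
    0 < Pr w (fun ω => ∀ j ∈ J, X ω j = x j) →
    0 < Pr w (fun ω => ∀ j ∈ J, X ω j = y j) →
    CondSubvecStochLE w X I (fun ω => ∀ j ∈ J, X ω j = y j)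
      (fun ω => ∀ j ∈ J, X ω j = x j)

/-- Negative left-tail dependence: `[X_I | X_J ≤ x_J] ≥_st [X_I | X_J ≤ x_J*]`
whenever `x_J ≤ x_J*` componentwise and both conditioning events have
positive probability. -/
def IsNLTD {Ω : Type*} [Fintype Ω] {n : ℕ} (w : Ω → ℝ) (X : Ω → Fin n → ℝ) : Prop :=
  ∀ I J : Finset (Fin n), Disjoint I J → ∀ x y : Fin n → ℝ, (∀ j ∈ J, x j ≤ y j) →
    0 < Pr w (fun ω => ∀ j ∈ J, X ω j ≤ x j) →
    0 < Pr w (fun ω => ∀ j ∈ J, X ω j ≤ y j) →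
    CondSubvecStochLE w X I (fun ω => ∀ j ∈ J, X ω j ≤ y j)
      (fun ω => ∀ j ∈ J, X ω j ≤ x j)

/-- Negative right-tail dependence: `[X_I | X_J > x_J] ≥_st [X_I | X_J > x_J*]`
whenever `x_J ≤ x_J*` componentwise and both conditioning events have
positive probability. -/
def IsNRTD {Ω : Type*} [Fintype Ω] {n : ℕ} (w : Ω → ℝ) (X : Ω → Fin n → ℝ) : Prop :=
  ∀ I J : Finset (Fin n), Disjoint I J → ∀ x y : Fin n → ℝ, (∀ j ∈ J, x j ≤ y j) →
    0 < Pr w (fun ω => ∀ j ∈ J, x j < X ω j) →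
    0 < Pr w (fun ω => ∀ j ∈ J, y j < X ω j) →
    CondSubvecStochLE w X I (fun ω => ∀ j ∈ J, y j < X ω j)
      (fun ω => ∀ j ∈ J, x j < X ω j)

/-- Negative association on a finite weighted sample space:
`Cov(ψ₁(X_{A₁}), ψ₂(X_{A₂})) ≤ 0` for disjoint `A₁, A₂` and bounded
coordinatewise increasing `ψ₁, ψ₂`. -/
def IsNAfin {Ω : Type*} [Fintype Ω] {n : ℕ} (w : Ω → ℝ) (X : Ω → Fin n → ℝ) : Prop :=
  ∀ A₁ A₂ : Finset (Fin n), Disjoint A₁ A₂ →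
    ∀ ψ₁ : ({i : Fin n // i ∈ A₁} → ℝ) → ℝ, ∀ ψ₂ : ({i : Fin n // i ∈ A₂} → ℝ) → ℝ,
      Monotone ψ₁ → Monotone ψ₂ → (∃ C, ∀ v, |ψ₁ v| ≤ C) → (∃ C, ∀ v, |ψ₂ v| ≤ C) →
      Expec w (fun ω => (ψ₁ fun i => X ω i.1) * (ψ₂ fun i => X ω i.1))
        ≤ Expec w (fun ω => ψ₁ fun i => X ω i.1) * Expec w (fun ω => ψ₂ fun i => X ω i.1)

/-- The uniform distribution on the permutations of `Fin n`. -/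
def unifPerm (n : ℕ) : Equiv.Perm (Fin n) → ℝ := fun _ => (Nat.factorial n : ℝ)⁻¹

/-- The random vector with the permutation distribution on `a`:
`X = (a_{σ(1)}, …, a_{σ(n)})` for a uniformly random permutation `σ`. -/
def permVec {n : ℕ} (a : Fin n → ℝ) (σ : Equiv.Perm (Fin n)) : Fin n → ℝ :=
  fun i => a (σ i)

/-!
Let `H` be the group of permutations fixing `J` pointwise. Both conditioning events are unions of
left cosets `σ H`, so under the uniform distribution each conditional expectation of `φ (X_I)` is an
average of coset averages, and it suffices to compare the coset averages at any `σ` with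
`X_J = x_J` and any `τ` with `X_J = y_J`. Both `a ∘ σ` and `a ∘ τ` are rearrangements of `a`, and
`a ∘ σ ≤ a ∘ τ` on `J`; hence off `J` the values of `a ∘ σ` dominate those of `a ∘ τ` after a
rearrangement `κ ∈ H`. Then `X (τ h) ≤ X (σ κ h)` on `I`, and `h ↦ κ h` permutes `H`.
-/

open Equiv MulAction

section Rearrangement

variable {ι α : Type*} [DecidableEq ι] [Preorder α]

theorem exists_mem_fixingSubgroup_le_comp (b c : ι → α) (κ₀ : Perm ι) (h₀ : ∀ i, c i ≤ b (κ₀ i))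
    (J : Finset ι) (hJ : ∀ j ∈ J, b j ≤ c j) :
    ∃ κ ∈ fixingSubgroup (Perm ι) (J : Set ι), ∀ i ∉ J, c i ≤ b (κ i) := by
  induction J using Finset.induction_on with
  | empty => exact ⟨κ₀, by simp, fun i _ => h₀ i⟩
  | insert j J hjJ ih =>
    -- Reroute the `i` with `κ i = j` to `κ j`: `c i ≤ b j ≤ c j ≤ b (κ j)`.
    obtain ⟨κ, hκ, hle⟩ := ih fun i hi => hJ i (Finset.mem_insert_of_mem hi)
    simp only [mem_fixingSubgroup_iff, Perm.smul_def, Finset.mem_coe] at hκ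
    have hκj : κ j ∉ J := fun h => hjJ (κ.injective (hκ _ h) ▸ h)
    refine ⟨swap j (κ j) * κ, ?_, ?_⟩
    · simp only [mem_fixingSubgroup_iff, Perm.smul_def, Finset.coe_insert, Set.mem_insert_iff,
        Finset.mem_coe, Perm.mul_apply]
      rintro i (rfl | hi)
      · exact swap_apply_right _ _
      · rw [hκ i hi, swap_apply_of_ne_of_ne (ne_of_mem_of_not_mem hi hjJ)
          (ne_of_mem_of_not_mem hi hκj)]
    · intro i hi
      rw [Finset.mem_insert, not_or] at hi
      rw [Perm.mul_apply]
      by_cases hκi : κ i = j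
      · rw [hκi, swap_apply_left]
        calc c i ≤ b (κ i) := hle i hi.2
          _ = b j := by rw [hκi]
          _ ≤ c j := hJ j (Finset.mem_insert_self j J)
          _ ≤ b (κ j) := hle j hjJ
      · rw [swap_apply_of_ne_of_ne hκi (κ.injective.ne hi.1)]
        exact hle i hi.2

end Rearrangement

section Averaging

variable {G : Type*} [Group G] (H : Subgroup G) [Fintype H] {s t : Finset G}

theorem sum_sum_mul_subgroup (hs : ∀ g ∈ s, ∀ h ∈ H, g * h ∈ s) (f : G → ℝ) :
    ∑ g ∈ s, ∑ h : H, f (g * h) = Fintype.card H * ∑ g ∈ s, f g := by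
  rw [Finset.sum_comm, ← nsmul_eq_mul, ← Finset.card_univ, ← Finset.sum_const]
  refine Finset.sum_congr rfl fun h _ => ?_
  exact Finset.sum_nbij' (· * h) (· * h⁻¹) (fun g hg => hs g hg h h.2)
    (fun g hg => hs g hg _ (H.inv_mem h.2)) (fun g _ => by simp) (fun g _ => by simp)
    (fun g _ => rfl)

theorem sum_mul_card_le_of_forall_sum_mul_le (hs : ∀ g ∈ s, ∀ h ∈ H, g * h ∈ s)
    (ht : ∀ g ∈ t, ∀ h ∈ H, g * h ∈ t) (f : G → ℝ)
    (hle : ∀ g ∈ s, ∀ g' ∈ t, ∑ h : H, f (g' * h) ≤ ∑ h : H, f (g * h)) :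
    (∑ g ∈ t, f g) * #s ≤ (∑ g ∈ s, f g) * #t := by
  have hH : (0 : ℝ) < Fintype.card H := Nat.cast_pos.mpr Fintype.card_pos
  refine le_of_mul_le_mul_left ?_ hH
  calc Fintype.card H * ((∑ g ∈ t, f g) * #s)
      = ∑ _g ∈ s, ∑ g' ∈ t, ∑ h : H, f (g' * h) := by
        rw [Finset.sum_const, sum_sum_mul_subgroup H ht, nsmul_eq_mul]; ring
    _ ≤ ∑ g ∈ s, ∑ _g' ∈ t, ∑ h : H, f (g * h) :=
        Finset.sum_le_sum fun g hg => Finset.sum_le_sum fun g' hg' => hle g hg g' hg'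
    _ = Fintype.card H * ((∑ g ∈ s, f g) * #t) := by
        simp_rw [Finset.sum_const, nsmul_eq_mul]
        rw [← Finset.mul_sum, sum_sum_mul_subgroup H hs]; ring

end Averaging

theorem sum_fixingSubgroup_mul_le {ι α : Type*} [Fintype ι] [DecidableEq ι] [Preorder α]
    (a : ι → α) {I J : Finset ι} (hIJ : Disjoint I J) {φ : (I → α) → ℝ} (hφ : Monotone φ)
    {σ τ : Perm ι} (hστ : ∀ j ∈ J, a (σ j) ≤ a (τ j)) :
    ∑ h : fixingSubgroup (Perm ι) (J : Set ι), φ (fun i => a ((τ * h) i))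
      ≤ ∑ h : fixingSubgroup (Perm ι) (J : Set ι), φ (fun i => a ((σ * h) i)) := by
  obtain ⟨κ, hκ, hle⟩ :=
    exists_mem_fixingSubgroup_le_comp (a ∘ σ) (a ∘ τ) (σ⁻¹ * τ) (by simp) J hστ
  have hmapsTo : ∀ h ∈ fixingSubgroup (Perm ι) (J : Set ι), ∀ i ∉ J, h i ∉ J := by
    intro h hh i hi hhi
    rw [mem_fixingSubgroup_iff] at hh
    exact hi (h.injective (hh _ hhi) ▸ hhi)
  calc ∑ h : fixingSubgroup (Perm ι) (J : Set ι), φ (fun i => a ((τ * h) i))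
      ≤ ∑ h : fixingSubgroup (Perm ι) (J : Set ι), φ (fun i => a ((σ * (κ * h)) i)) :=
        Finset.sum_le_sum fun h _ => hφ fun i =>
          hle _ (hmapsTo h h.2 i (Finset.disjoint_left.mp hIJ i.2))
    _ = ∑ h : fixingSubgroup (Perm ι) (J : Set ι), φ (fun i => a ((σ * h) i)) :=
        Fintype.sum_equiv (Equiv.mulLeft ⟨κ, hκ⟩) _ _ fun h => rfl

theorem exists_of_Pr_pos {Ω : Type*} [Fintype Ω] {w : Ω → ℝ} {A : Ω → Prop}
    (h : 0 < Pr w A) : ∃ ω, A ω := by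
  by_contra! hA
  exact h.ne' (Finset.sum_eq_zero fun ω _ => if_neg (hA ω))

theorem CExp_const {Ω : Type*} [Fintype Ω] {c : ℝ} (hc : c ≠ 0) (A : Ω → Prop) (f : Ω → ℝ) :
    CExp (fun _ => c) A f = (∑ ω with A ω, f ω) / #{ω | A ω} := by
  rw [CExp, Pr, ← Finset.sum_filter, ← Finset.sum_filter, Finset.sum_const, nsmul_eq_mul,
    ← Finset.mul_sum, mul_comm _ c, mul_div_mul_left _ _ hc]

theorem CExp_const_le_of_forall_sum_mul_le {G : Type*} [Group G] [Fintype G] (H : Subgroup G)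
    [Fintype H] {c : ℝ} (hc : c ≠ 0) {A B : G → Prop} (hA : ∀ g, A g → ∀ h ∈ H, A (g * h))
    (hB : ∀ g, B g → ∀ h ∈ H, B (g * h)) (hA₀ : ∃ g, A g) (hB₀ : ∃ g, B g) (f : G → ℝ)
    (hle : ∀ g, A g → ∀ g', B g' → ∑ h : H, f (g' * h) ≤ ∑ h : H, f (g * h)) :
    CExp (fun _ => c) B f ≤ CExp (fun _ => c) A f := by
  have hcard {C : G → Prop} (hC : ∃ g, C g) : (0 : ℝ) < #{g | C g} := by
    obtain ⟨g, hg⟩ := hC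
    exact Nat.cast_pos.mpr (Finset.card_pos.mpr ⟨g, by simpa using hg⟩)
  rw [CExp_const hc, CExp_const hc, div_le_div_iff₀ (hcard hB₀) (hcard hA₀)]
  refine sum_mul_card_le_of_forall_sum_mul_le H (by simpa using hA) (by simpa using hB) f ?_
  simpa using hle

theorem permutation_distribution_isNRD_general (n : ℕ) (a : Fin n → ℝ) :
    IsNRD (unifPerm n) (permVec a) := by
  intro I J hIJ x y hxy hPx hPy φ hφ _
  have hfixed (z : Fin n → ℝ) (σ : Perm (Fin n)) (hσ : ∀ j ∈ J, permVec a σ j = z j) :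
      ∀ h ∈ fixingSubgroup (Perm (Fin n)) (J : Set (Fin n)), ∀ j ∈ J, permVec a (σ * h) j = z j := by
    intro h hh j hj
    simp only [mem_fixingSubgroup_iff, Perm.smul_def, Finset.mem_coe] at hh
    simp only [← hσ j hj, permVec, Perm.mul_apply, hh j hj]
  refine CExp_const_le_of_forall_sum_mul_le _ (c := (n.factorial : ℝ)⁻¹) (by positivity)
    (hfixed x) (hfixed y) (exists_of_Pr_pos hPx) (exists_of_Pr_pos hPy) _ fun σ hσ τ hτ =>
      sum_fixingSubgroup_mul_le a hIJ hφ fun j hj => ?_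
  exact (hσ j hj).trans_le ((hxy j hj).trans_eq (hτ j hj).symm)

/-- A random vector with the permutation distribution on any
`a ∈ ℝ^n` (`n ≥ 2`) is negatively regression dependent (NRD). -/
theorem permutation_distribution_isNRD (n : ℕ) (hn : 2 ≤ n) (a : Fin n → ℝ) :
    IsNRD (unifPerm n) (permVec a) :=
  permutation_distribution_isNRD_general n a
end
end

section
/- Let n ≥ 2 and let a = (a_1, …, a_n) be any vector of real numbers. If the random vector X has the permutation distribution on a, then X is negatively left-tail dependent (NLTD): for all disjoint subsets I, J of {1,…,n} and all vectors x_J ≤ x_J* componentwise such that both conditioning events have positive probability, [X_I | X_J ≤ x_J] ≥_st [X_I | X_J ≤ x_J*]. -/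
open scoped Classical
open Finset

noncomputable section

/-!
Conditioning on `X_J ≤ x_J` restricts each position `j ∈ J` to the lower set of values
`{u | a u ≤ x_j}`. Raising the thresholds one position at a time, and splitting each event
according to the value taken at that position, everything reduces to one exchange inequality:
pinning a position `j₀ ∉ I` to a value `w` instead of a value `v` with `a v ≤ a w` lowers the mean
of an increasing function `Φ` of `X_I`.

For that, exchange the values `v` and `w`. This maps the `v`-pinned permutations onto part of the
`w`-pinned ones, never increasing `Φ`. The remaining `w`-pinned permutations put `v` at a position
`r` that does not admit `w`; exchanging back, they pin `j₀` to `v` and `r` to `w`, and they are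
compared with the `v`-pinned permutations split by their value `u` at `r`, where `a u ≤ a w`.
This is the same inequality at the position `r`, with one more pinned position, so induction on
the number of positions allowing at least two values closes the argument.
-/

open Equiv Function

section Averages

variable {γ : Type*} {Φ : γ → ℝ} {s t u : Finset γ}

/-- The mean of `Φ` over `s` is at most its mean over `t`, cross-multiplied so that empty sets
are harmless. -/
def MeanLE (Φ : γ → ℝ) (s t : Finset γ) : Prop :=
  (∑ x ∈ s, Φ x) * #t ≤ (∑ x ∈ t, Φ x) * #s

namespace MeanLE

theorem refl (Φ : γ → ℝ) (s : Finset γ) : MeanLE Φ s s := le_rfl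

theorem empty_right : MeanLE Φ s ∅ := by simp [MeanLE]

theorem trans (hst : MeanLE Φ s t) (htu : MeanLE Φ t u) (ht : t.Nonempty) : MeanLE Φ s u := by
  unfold MeanLE at *
  have hpos : (0 : ℝ) < #t := by exact_mod_cast ht.card_pos
  have h₁ := mul_le_mul_of_nonneg_right hst (Nat.cast_nonneg (α := ℝ) #u)
  have h₂ := mul_le_mul_of_nonneg_right htu (Nat.cast_nonneg (α := ℝ) #s)
  refine le_of_mul_le_mul_right ?_ hpos
  linarith

theorem of_subset_left [DecidableEq γ] (hts : t ⊆ s) (h₁ : MeanLE Φ t u) (h₂ : MeanLE Φ (s \ t) u) :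
    MeanLE Φ s u := by
  unfold MeanLE at *
  rw [← sum_sdiff hts, ← card_sdiff_add_card_eq_card hts]
  push_cast
  linarith

theorem of_fiberwise_left {κ : Type*} [DecidableEq κ] {K : Finset κ} (g : γ → κ)
    (hg : ∀ x ∈ s, g x ∈ K) (h : ∀ k ∈ K, MeanLE Φ {x ∈ s | g x = k} t) : MeanLE Φ s t := by
  unfold MeanLE at *
  rw [← sum_fiberwise_of_maps_to hg, card_eq_sum_card_fiberwise hg]
  push_cast
  rw [sum_mul, mul_sum]
  exact sum_le_sum h

theorem of_fiberwise_right {κ : Type*} [DecidableEq κ] {K : Finset κ} (g : γ → κ)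
    (hg : ∀ x ∈ t, g x ∈ K) (h : ∀ k ∈ K, MeanLE Φ s {x ∈ t | g x = k}) : MeanLE Φ s t := by
  unfold MeanLE at *
  rw [← sum_fiberwise_of_maps_to hg, card_eq_sum_card_fiberwise hg]
  push_cast
  rw [mul_sum K, sum_mul K]
  exact sum_le_sum h

theorem map_left_iff (e : γ ↪ γ) (he : ∀ x ∈ s, Φ (e x) = Φ x) :
    MeanLE Φ (s.map e) t ↔ MeanLE Φ s t := by
  rw [MeanLE, MeanLE, sum_map, card_map, sum_congr rfl he]

theorem map_left_self (e : γ ↪ γ) (he : ∀ x ∈ s, Φ (e x) ≤ Φ x) : MeanLE Φ (s.map e) s := by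
  rw [MeanLE, sum_map, card_map]
  exact mul_le_mul_of_nonneg_right (sum_le_sum he) (Nat.cast_nonneg _)

end MeanLE

theorem meanLE_iff_div_le_div (hs : s.Nonempty) (ht : t.Nonempty) :
    MeanLE Φ s t ↔ (∑ x ∈ s, Φ x) / #s ≤ (∑ x ∈ t, Φ x) / #t :=
  (div_le_div_iff₀ (by exact_mod_cast hs.card_pos) (by exact_mod_cast ht.card_pos)).symm

end Averages

section Permutations

variable {α : Type*}

def swapValues (v w : α) : Perm α ≃ Perm α := Equiv.mulLeft (swap v w)

theorem swapValues_apply (v w : α) (σ : Perm α) (k : α) : swapValues v w σ k = swap v w (σ k) :=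
  rfl

theorem mem_map_swapValues {v w : α} {σ : Perm α} {s : Finset (Perm α)} :
    σ ∈ s.map (swapValues v w).toEmbedding ↔ swapValues v w σ ∈ s := by
  rw [mem_map_equiv, swapValues, Equiv.mulLeft_symm, swap_inv]

theorem swapValues_apply_of_ne {σ : Perm α} {j k l v w : α} (hj : σ j = v) (hk : σ k = w)
    (hlj : l ≠ j) (hlk : l ≠ k) : swapValues v w σ l = σ l :=
  swap_apply_of_ne_of_ne (fun h => hlj (σ.injective (h.trans hj.symm)))
    (fun h => hlk (σ.injective (h.trans hk.symm)))

variable [Fintype α]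

def permsWithin (C : α → Finset α) : Finset (Perm α) :=
  univ.filter fun σ => ∀ j, σ j ∈ C j

theorem mem_permsWithin {C : α → Finset α} {σ : Perm α} :
    σ ∈ permsWithin C ↔ ∀ j, σ j ∈ C j := by
  simp [permsWithin]

theorem mem_permsWithin_update {C : α → Finset α} {σ : Perm α} {j : α} {s : Finset α} :
    σ ∈ permsWithin (update C j s) ↔ σ j ∈ s ∧ ∀ k ≠ j, σ k ∈ C k := by
  rw [mem_permsWithin, forall_update_iff C (fun k t => σ k ∈ t)]

theorem filter_permsWithin_apply_eq {C : α → Finset α} {j u : α} (hu : u ∈ C j) :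
    {σ ∈ permsWithin C | σ j = u} = permsWithin (update C j {u}) := by
  ext σ
  rw [mem_filter, mem_permsWithin_update, mem_singleton, mem_permsWithin]
  refine ⟨fun h => ⟨h.2, fun k _ => h.1 k⟩, fun h => ⟨fun k => ?_, h.1⟩⟩
  obtain rfl | hk := eq_or_ne k j
  · exact h.1 ▸ hu
  · exact h.2 k hk

theorem MeanLE.of_pins_left {Φ : Perm α → ℝ} {C : α → Finset α}
    {t : Finset (Perm α)} (j : α) (h : ∀ u ∈ C j, MeanLE Φ (permsWithin (update C j {u})) t) :
    MeanLE Φ (permsWithin C) t :=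
  .of_fiberwise_left (· j) (fun _ hσ => mem_permsWithin.1 hσ j) fun u hu =>
    filter_permsWithin_apply_eq hu ▸ h u hu

theorem MeanLE.of_pins_right {Φ : Perm α → ℝ} {C : α → Finset α}
    {s : Finset (Perm α)} (j : α) (h : ∀ u ∈ C j, MeanLE Φ s (permsWithin (update C j {u}))) :
    MeanLE Φ s (permsWithin C) :=
  .of_fiberwise_right (· j) (fun _ hσ => mem_permsWithin.1 hσ j) fun u hu =>
    filter_permsWithin_apply_eq hu ▸ h u hu

theorem mem_permsWithin_pins {C : α → Finset α} {σ : Perm α} {j k x y : α} (hjk : j ≠ k) :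
    σ ∈ permsWithin (update (update C j {x}) k {y}) ↔
      σ j = x ∧ σ k = y ∧ ∀ l, l ≠ j → l ≠ k → σ l ∈ C l := by
  simp only [mem_permsWithin_update, mem_singleton, update_apply]
  constructor
  · rintro ⟨hk, h⟩
    refine ⟨by simpa using h j hjk, hk, fun l hlj hlk => by simpa [hlj] using h l hlk⟩
  · rintro ⟨hj, hk, h⟩
    refine ⟨hk, fun l hlk => ?_⟩
    split_ifs with hlj
    · exact hlj ▸ mem_singleton.2 hj
    · exact h l hlj hlk

theorem map_swapValues_permsWithin_pins {C : α → Finset α} {j k v w : α} (hjk : j ≠ k) :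
    (permsWithin (update (update C j {w}) k {v})).map (swapValues v w).toEmbedding =
      permsWithin (update (update C j {v}) k {w}) := by
  ext σ
  rw [mem_map_swapValues, mem_permsWithin_pins hjk, mem_permsWithin_pins hjk]
  simp only [swapValues_apply, swap_apply_eq_iff, swap_apply_left, swap_apply_right]
  refine and_congr_right fun hj => and_congr_right fun hk => forall_congr' fun l => ?_
  refine imp_congr_right fun hlj => imp_congr_right fun hlk => ?_
  rw [← swapValues_apply, swapValues_apply_of_ne hj hk hlj hlk]

end Permutations

section Exchange

variable {α β : Type*} [LinearOrder β] {a : α → β} {I : Finset α} {Φ : Perm α → ℝ}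
  {C : α → Finset α} {j₀ r v w : α}

/-- Lower sets for `a`, `univ`, and pins `{v}` with `a v ≤ a w`, `v ≠ w` all have this property;
it is all that exchanging the values `v` and `w` needs of the constraint on a position. -/
def IsCutAt (a : α → β) (w : α) (s : Finset α) : Prop :=
  (w ∈ s → ∀ u, a u ≤ a w → u ∈ s) ∧ (w ∉ s → ∀ u ∈ s, a u ≤ a w)

theorem isCutAt_singleton (hvw : v ≠ w) (h : a v ≤ a w) : IsCutAt a w {v} :=
  ⟨fun hw => (hvw (mem_singleton.1 hw).symm).elim, fun _ _ hu => mem_singleton.1 hu ▸ h⟩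

def ValueMonotone (a : α → β) (I : Finset α) (Φ : Perm α → ℝ) : Prop :=
  ∀ σ τ : Perm α, (∀ i ∈ I, a (σ i) ≤ a (τ i)) → Φ σ ≤ Φ τ

theorem ValueMonotone.eq_of_eqOn (hΦ : ValueMonotone a I Φ) {σ τ : Perm α}
    (h : ∀ i ∈ I, σ i = τ i) : Φ σ = Φ τ :=
  le_antisymm (hΦ σ τ fun i hi => (congrArg a (h i hi)).le)
    (hΦ τ σ fun i hi => (congrArg a (h i hi)).ge)

theorem ValueMonotone.swapValues_le (hΦ : ValueMonotone a I Φ) (hj₀ : j₀ ∉ I) (h : a v ≤ a w)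
    {τ : Perm α} (hτ : τ j₀ = v) : Φ (swapValues v w τ) ≤ Φ τ := by
  refine hΦ _ _ fun i hi => ?_
  have hiv : τ i ≠ v := fun hi' => hj₀ (τ.injective (hi'.trans hτ.symm) ▸ hi)
  rw [swapValues_apply]
  by_cases hiw : τ i = w
  · rw [hiw, swap_apply_right]
    exact hiw ▸ h
  · rw [swap_apply_of_ne_of_ne hiv hiw]

variable [Fintype α]

theorem isCutAt_univ (a : α → β) (w : α) : IsCutAt a w univ :=
  ⟨fun _ u _ => mem_univ u, fun h => (h (mem_univ w)).elim⟩

theorem isCutAt_filter_le (a : α → β) (w : α) (t : β) : IsCutAt a w {u | a u ≤ t} := by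
  simp only [IsCutAt, mem_filter, mem_univ, true_and, not_le]
  exact ⟨fun hw u hu => hu.trans hw, fun hw u hu => (hu.trans_lt hw).le⟩

theorem map_swapValues_subset (hC : ∀ j ≠ j₀, IsCutAt a w (C j)) (h : a v ≤ a w) :
    (permsWithin (update C j₀ {v})).map (swapValues v w).toEmbedding ⊆
      permsWithin (update C j₀ {w}) := by
  intro σ hσ
  obtain ⟨τ, hτ, rfl⟩ := mem_map.1 hσ
  rw [mem_permsWithin_update, mem_singleton] at hτ ⊢
  refine ⟨by simp [swapValues_apply, hτ.1], fun k hk => ?_⟩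
  have hkv : τ k ≠ v := fun hk' => hk (τ.injective (hk'.trans hτ.1.symm))
  rw [Equiv.toEmbedding_apply, swapValues_apply]
  by_cases hkw : τ k = w
  · rw [hkw, swap_apply_right]
    exact (hC k hk).1 (hkw ▸ hτ.2 k hk) v h
  · rw [swap_apply_of_ne_of_ne hkv hkw]
    exact hτ.2 k hk

theorem symm_apply_ne_of_mem_pin (hvw : v ≠ w) {σ : Perm α}
    (hσ : σ ∈ permsWithin (update C j₀ {w})) : σ.symm v ≠ j₀ := fun h =>
  hvw (by rw [← mem_singleton.1 (mem_permsWithin_update.1 hσ).1, ← h, apply_symm_apply])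

theorem swapValues_mem_pin_iff (hvw : v ≠ w) {σ : Perm α} (hσ : σ ∈ permsWithin (update C j₀ {w})) :
    swapValues v w σ ∈ permsWithin (update C j₀ {v}) ↔ w ∈ C (σ.symm v) := by
  have hr := symm_apply_ne_of_mem_pin hvw hσ
  rw [mem_permsWithin_update, mem_singleton] at hσ
  obtain ⟨hj₀, hσC⟩ := hσ
  rw [mem_permsWithin_update, mem_singleton]
  constructor
  · rintro ⟨-, h⟩
    simpa [swapValues_apply] using h _ hr
  · refine fun hw => ⟨by simp [swapValues_apply, hj₀], fun k hk => ?_⟩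
    rw [swapValues_apply]
    by_cases hkv : σ k = v
    · rw [hkv, swap_apply_left, ← (Equiv.symm_apply_eq σ).2 hkv.symm]
      exact hw
    · rw [swap_apply_of_ne_of_ne hkv fun h => hk (σ.injective (h.trans hj₀.symm))]
      exact hσC k hk

theorem filter_sdiff_map_swapValues_eq (hvw : v ≠ w) (hr : r ≠ j₀) (hvr : v ∈ C r)
    (hwr : w ∉ C r) :
    {σ ∈ permsWithin (update C j₀ {w}) \
        (permsWithin (update C j₀ {v})).map (swapValues v w).toEmbedding | σ.symm v = r} =
      permsWithin (update (update C j₀ {w}) r {v}) := by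
  ext σ
  rw [mem_filter, mem_sdiff, mem_map_swapValues, mem_permsWithin_pins hr.symm, symm_apply_eq,
    eq_comm (a := v)]
  constructor
  · rintro ⟨⟨hσ, -⟩, hrv⟩
    obtain ⟨hj₀, hC⟩ := mem_permsWithin_update.1 hσ
    exact ⟨mem_singleton.1 hj₀, hrv, fun l hl _ => hC l hl⟩
  · rintro ⟨hj₀, hrv, hC⟩
    have hσ : σ ∈ permsWithin (update C j₀ {w}) := by
      refine mem_permsWithin_update.2 ⟨mem_singleton.2 hj₀, fun l hl => ?_⟩
      obtain rfl | hlr := eq_or_ne l r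
      · exact hrv ▸ hvr
      · exact hC l hl hlr
    refine ⟨⟨hσ, ?_⟩, hrv⟩
    rw [swapValues_mem_pin_iff hvw hσ, (Equiv.symm_apply_eq σ).2 hrv.symm]
    exact hwr

theorem card_filter_pin_lt (hr : r ≠ j₀) (h : 1 < #(C r)) :
    #{j | j ≠ r ∧ 1 < #(update C j₀ {v} j)} < #{j | j ≠ j₀ ∧ 1 < #(C j)} := by
  refine card_lt_card ((ssubset_iff_of_subset fun j hj => ?_).2 ⟨r, by simp [hr, h], by simp⟩)
  simp only [mem_filter, mem_univ, true_and] at hj ⊢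
  obtain rfl | hj₀ := eq_or_ne j j₀
  · simp at hj
  · exact ⟨hj₀, by simpa [update_of_ne hj₀] using hj.2⟩

theorem meanLE_pin_of_le (hΦ : ValueMonotone a I Φ) (hI : ∀ i ∈ I, C i = univ) (hj₀ : j₀ ∉ I)
    (hC : ∀ j ≠ j₀, IsCutAt a w (C j)) (hvw : a v ≤ a w) :
    MeanLE Φ (permsWithin (update C j₀ {w})) (permsWithin (update C j₀ {v})) := by
  induction hm : #{j | j ≠ j₀ ∧ 1 < #(C j)} using Nat.strong_induction_on
    generalizing C j₀ v with
  | _ m ih =>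
  obtain rfl | hne := eq_or_ne v w
  · exact .refl _ _
  obtain hempty | ⟨τ, hτ⟩ := (permsWithin (update C j₀ {v})).eq_empty_or_nonempty
  · exact hempty ▸ .empty_right
  refine .of_subset_left (map_swapValues_subset hC hvw)
    (.map_left_self _ fun σ hσ => hΦ.swapValues_le hj₀ hvw (mem_singleton.1
      (mem_permsWithin_update.1 hσ).1)) ?_
  refine .of_fiberwise_left (K := {r | r ≠ j₀ ∧ v ∈ C r ∧ w ∉ C r}) (·.symm v) ?_ fun r hr => ?_
  · intro σ hσ
    obtain ⟨hσw, hσv⟩ := mem_sdiff.1 hσ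
    rw [mem_map_swapValues, swapValues_mem_pin_iff hne hσw] at hσv
    have hr := symm_apply_ne_of_mem_pin hne hσw
    simpa [hr, hσv] using (mem_permsWithin_update.1 hσw).2 _ hr
  obtain ⟨hrj₀, hvr, hwr⟩ : r ≠ j₀ ∧ v ∈ C r ∧ w ∉ C r := by simpa using hr
  have hrI : r ∉ I := fun hrI => hwr (hI r hrI ▸ mem_univ w)
  rw [filter_sdiff_map_swapValues_eq hne hrj₀ hvr hwr, ← MeanLE.map_left_iff
    (swapValues v w).toEmbedding fun σ hσ => hΦ.eq_of_eqOn fun i hi => ?_,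
    map_swapValues_permsWithin_pins hrj₀.symm]
  · refine .of_pins_right r fun u hu => ?_
    rw [update_of_ne hrj₀] at hu
    have hCr : 1 < #(C r) := by
      obtain ⟨hτj₀, hτC⟩ := mem_permsWithin_update.1 hτ
      exact one_lt_card.2 ⟨τ r, hτC r hrj₀, v, hvr,
        fun h => hrj₀ (τ.injective (h.trans (mem_singleton.1 hτj₀).symm))⟩
    refine ih _ (hm ▸ card_filter_pin_lt hrj₀ hCr) (fun i hi => ?_) hrI (fun j hj => ?_)
      ((hC r hrj₀).2 hwr u hu) rfl
    · rw [update_of_ne (by rintro rfl; exact hj₀ hi), hI i hi]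
    · obtain rfl | hj₀' := eq_or_ne j j₀
      · rw [update_self]; exact isCutAt_singleton hne hvw
      · rw [update_of_ne hj₀']; exact hC j hj₀'
  · obtain ⟨hj₀σ, hrσ, -⟩ := (mem_permsWithin_pins hrj₀.symm).1 hσ
    exact swapValues_apply_of_ne hrσ hj₀σ (by rintro rfl; exact hrI hi)
      (by rintro rfl; exact hj₀ hi)

end Exchange

section Tails

variable {α β : Type*} [Fintype α] [LinearOrder β] {a : α → β} {I J : Finset α}
  {Φ : Perm α → ℝ} {C : α → Finset α} {j₀ : α}

theorem permsWithin_update_mono {D D' : Finset α} (h : D ⊆ D') :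
    permsWithin (update C j₀ D) ⊆ permsWithin (update C j₀ D') := fun σ hσ => by
  rw [mem_permsWithin_update] at hσ ⊢
  exact ⟨h hσ.1, hσ.2⟩

theorem permsWithin_update_sdiff (D D' : Finset α) :
    permsWithin (update C j₀ D') \ permsWithin (update C j₀ D) =
      permsWithin (update C j₀ (D' \ D)) := by
  ext σ
  simp only [mem_sdiff, mem_permsWithin_update]
  tauto

theorem meanLE_update_of_subset (hΦ : ValueMonotone a I Φ) (hI : ∀ i ∈ I, C i = univ)
    (hj₀ : j₀ ∉ I) (hC : ∀ j ≠ j₀, ∀ w, IsCutAt a w (C j)) {D D' : Finset α} (hDD' : D ⊆ D')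
    (hlow : ∀ u ∈ D, ∀ z ∈ D' \ D, a u ≤ a z) :
    MeanLE Φ (permsWithin (update C j₀ D')) (permsWithin (update C j₀ D)) := by
  refine .of_subset_left (permsWithin_update_mono hDD') (.refl _ _) ?_
  rw [permsWithin_update_sdiff]
  refine .of_pins_left j₀ fun z hz => .of_pins_right j₀ fun u hu => ?_
  rw [update_self] at hz hu
  rw [update_idem, update_idem]
  exact meanLE_pin_of_le hΦ hI hj₀ (fun j hj => hC j hj z) (hlow u hu z hz)

def lowerTail (a : α → β) (J : Finset α) (x : α → β) : Finset (Perm α) :=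
  {σ | ∀ j ∈ J, a (σ j) ≤ x j}

theorem mem_lowerTail {x : α → β} {σ : Perm α} : σ ∈ lowerTail a J x ↔ ∀ j ∈ J, a (σ j) ≤ x j := by
  simp [lowerTail]

theorem lowerTail_mono {x y : α → β} (h : ∀ j ∈ J, x j ≤ y j) : lowerTail a J x ⊆ lowerTail a J y :=
  fun _ hσ => mem_lowerTail.2 fun j hj => (mem_lowerTail.1 hσ j hj).trans (h j hj)

def tailConstraints (a : α → β) (J : Finset α) (x : α → β) (j : α) : Finset α :=
  if j ∈ J then univ.filter (a · ≤ x j) else univ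

theorem lowerTail_update_eq (hj₀ : j₀ ∈ J) (x : α → β) (t : β) :
    lowerTail a J (update x j₀ t) =
      permsWithin (update (tailConstraints a J x) j₀ (univ.filter (a · ≤ t))) := by
  ext σ
  rw [mem_lowerTail, mem_permsWithin_update]
  constructor
  · intro h
    refine ⟨by simpa using h j₀ hj₀, fun k hk => ?_⟩
    by_cases hkJ : k ∈ J
    · simpa [tailConstraints, hkJ, update_of_ne hk] using h k hkJ
    · simp [tailConstraints, hkJ]
  · rintro ⟨h₀, h⟩ j hj
    obtain rfl | hjj₀ := eq_or_ne j j₀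
    · simpa using h₀
    · simpa [tailConstraints, hj, update_of_ne hjj₀] using h j hjj₀

theorem meanLE_lowerTail_update (hΦ : ValueMonotone a I Φ) (hIJ : Disjoint I J) (hj₀ : j₀ ∈ J)
    {x : α → β} {t : β} (ht : x j₀ ≤ t) :
    MeanLE Φ (lowerTail a J (update x j₀ t)) (lowerTail a J x) := by
  have hC : ∀ j ≠ j₀, ∀ w, IsCutAt a w (tailConstraints a J x j) := fun j _ w => by
    by_cases hj : j ∈ J
    · simpa [tailConstraints, hj] using isCutAt_filter_le a w (x j)
    · simpa [tailConstraints, hj] using isCutAt_univ a w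
  have := meanLE_update_of_subset (C := tailConstraints a J x) hΦ
    (fun i hi => if_neg (disjoint_left.1 hIJ hi)) (disjoint_right.1 hIJ hj₀) hC
    (D := univ.filter (a · ≤ x j₀)) (D' := univ.filter (a · ≤ t))
    (monotone_filter_right _ fun _ _ hu => hu.trans ht) fun u hu z hz => by
      simp only [mem_sdiff, mem_filter, mem_univ, true_and, not_le] at hu hz
      exact (hu.trans_lt hz.2).le
  rwa [← lowerTail_update_eq hj₀, ← lowerTail_update_eq hj₀, update_eq_self] at this

theorem meanLE_lowerTail (hΦ : ValueMonotone a I Φ) (hIJ : Disjoint I J) {x y : α → β}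
    (hxy : ∀ j ∈ J, x j ≤ y j) (hx : (lowerTail a J x).Nonempty) :
    MeanLE Φ (lowerTail a J y) (lowerTail a J x) := by
  suffices ∀ S ⊆ J, MeanLE Φ (lowerTail a J (S.piecewise y x)) (lowerTail a J x) by
    have hy : ∀ j ∈ J, J.piecewise y x j = y j := fun j hj => J.piecewise_eq_of_mem _ _ hj
    rw [← subset_antisymm (lowerTail_mono fun j hj => (hy j hj).le)
      (lowerTail_mono fun j hj => (hy j hj).ge)]
    exact this J subset_rfl
  intro S
  induction S using Finset.induction_on with
  | empty => simpa using .refl _ _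
  | insert j₀ S hj₀S ih =>
    intro hS
    have hSx : ∀ j ∈ J, x j ≤ S.piecewise y x j := fun j hj => by
      by_cases hjS : j ∈ S <;> simp [hjS, hxy j hj]
    rw [piecewise_insert]
    refine (meanLE_lowerTail_update hΦ hIJ (hS (mem_insert_self _ _)) ?_).trans
      (ih ((subset_insert _ _).trans hS)) (hx.mono (lowerTail_mono hSx))
    rw [piecewise_eq_of_notMem _ _ _ hj₀S]
    exact hxy _ (hS (mem_insert_self _ _))

end Tails

section Uniform

theorem sum_ite_eq_sum_of_mem_iff {ι : Type*} [Fintype ι] {A : ι → Prop} {s : Finset ι}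
    (hs : ∀ i, i ∈ s ↔ A i) (g : ι → ℝ) : (∑ i, if A i then g i else 0) = ∑ i ∈ s, g i := by
  simp_rw [← hs, sum_ite_mem, univ_inter]

variable {n : ℕ} {A : Perm (Fin n) → Prop} {s : Finset (Perm (Fin n))}

theorem pr_unifPerm (hs : ∀ σ, σ ∈ s ↔ A σ) : Pr (unifPerm n) A = (n.factorial : ℝ)⁻¹ * #s := by
  rw [Pr, sum_ite_eq_sum_of_mem_iff hs]
  simp [unifPerm, mul_comm]

theorem cExp_unifPerm (hs : ∀ σ, σ ∈ s ↔ A σ) (f : Perm (Fin n) → ℝ) :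
    CExp (unifPerm n) A f = (∑ σ ∈ s, f σ) / #s := by
  rw [CExp, pr_unifPerm hs, sum_ite_eq_sum_of_mem_iff hs]
  simp only [unifPerm]
  rw [← mul_sum, mul_div_mul_left _ _ (by positivity)]

theorem nonempty_of_pr_unifPerm_pos (hs : ∀ σ, σ ∈ s ↔ A σ) (h : 0 < Pr (unifPerm n) A) :
    s.Nonempty := by
  rw [pr_unifPerm hs] at h
  exact card_pos.1 (by exact_mod_cast pos_of_mul_pos_right h (by positivity))

end Uniform

theorem permutation_distribution_isNLTD_general (n : ℕ) (a : Fin n → ℝ) :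
    IsNLTD (unifPerm n) (permVec a) := by
  intro I J hIJ x y hxy hx _ φ hφ _
  simp only [permVec] at *
  have hΦ : ValueMonotone a I fun σ => φ fun i => a (σ i) := fun σ τ h => hφ fun i => h i i.2
  have hxne := nonempty_of_pr_unifPerm_pos (fun _ => mem_lowerTail) hx
  rw [cExp_unifPerm (fun _ => mem_lowerTail), cExp_unifPerm (fun _ => mem_lowerTail),
    ← meanLE_iff_div_le_div (hxne.mono (lowerTail_mono hxy)) hxne]
  exact meanLE_lowerTail hΦ hIJ hxy hxne

/-- A random vector with the permutation distribution on any
`a ∈ ℝ^n` (`n ≥ 2`) is negatively left-tail dependent (NLTD). -/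
theorem permutation_distribution_isNLTD (n : ℕ) (hn : 2 ≤ n) (a : Fin n → ℝ) :
    IsNLTD (unifPerm n) (permVec a) :=
  permutation_distribution_isNLTD_general n a
end
end

section
/- Let n ≥ 2 and let a = (a_1, …, a_n) be any vector of real numbers. If the random vector X has the permutation distribution on a, then X is negatively right-tail dependent (NRTD): for all disjoint subsets I, J of {1,…,n} and all vectors x_J ≤ x_J* componentwise such that both conditioning events have positive probability, [X_I | X_J > x_J] ≥_st [X_I | X_J > x_J*]. -/
open scoped Classical
open Finset

noncomputable section

/-!
Sorting `a` turns `X` into `b ∘ ρ`, with `b` monotone and `ρ` a uniformly random bijection onto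
`Fin n`, and turns each event `X_J > x_J` into constraints `ρ j ∈ C j` by upper sets `C j`. For `f`
increasing in the coordinates outside `J`, the conditional mean of `f` increases with the upper
sets `C j`. Enlarging one `C j₀` one element at a time, starting from its minimum, it is enough to
see that the mean given `ρ j₀ = k` is at most the mean given `ρ j₀ = m` whenever `m ≤ k`. Both
pinned problems are bijections from the other positions onto `Fin N`, read through `k.succAbove`
and `m.succAbove` respectively; as `k.succAbove ≤ m.succAbove`, the `k`-pinned configuration has
smaller values and tighter constraints, and induction on `N` closes the argument.
-/

theorem Fin.antitone_succAbove {N : ℕ} (i : Fin N) :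
    Antitone fun p : Fin (N + 1) => p.succAbove i := by
  intro m k hmk
  simp only [Fin.succAbove, Fin.le_def, Fin.lt_def] at *
  split_ifs <;> simp only [Fin.val_castSucc, Fin.val_succ] <;> omega

lemma sum_mul_le_of_forall_mul_le {ι : Type*} (s : Finset ι) (F D : ι → ℝ) (m : ι)
    (h : ∀ k ∈ s, F k * D m ≤ F m * D k) :
    (∑ k ∈ s, F k) * (D m + ∑ k ∈ s, D k) ≤ (F m + ∑ k ∈ s, F k) * ∑ k ∈ s, D k := by
  have hsum : (∑ k ∈ s, F k) * D m ≤ F m * ∑ k ∈ s, D k := by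
    rw [sum_mul, mul_sum]
    exact sum_le_sum h
  linarith

lemma forall_mem_update_iff {β γ : Type*} [DecidableEq β] {J : Finset β} {j₀ : β} (hj₀ : j₀ ∈ J)
    (C : β → Finset γ) (U : Finset γ) (σ : β → γ) :
    (∀ j ∈ J, σ j ∈ Function.update C j₀ U j) ↔ σ j₀ ∈ U ∧ ∀ j ∈ J, j ≠ j₀ → σ j ∈ C j := by
  constructor
  · intro h
    exact ⟨by simpa using h j₀ hj₀, fun j hj hne => by simpa [hne] using h j hj⟩
  · rintro ⟨h₀, h⟩ j hj
    rcases eq_or_ne j j₀ with rfl | hne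
    · simpa using h₀
    · simpa [hne] using h j hj hne

lemma update_subset_update {β γ : Type*} [DecidableEq β] (C : β → Finset γ) (j₀ : β)
    {U V : Finset γ} (hUV : U ⊆ V) (j : β) :
    Function.update C j₀ U j ⊆ Function.update C j₀ V j := by
  rcases eq_or_ne j j₀ with rfl | hne
  · simpa using hUV
  · simp [hne]

section Pinning

variable {α : Type*} {N : ℕ}

def pinnedConstraints (C : α → Finset (Fin (N + 1))) (x₀ : α) (v : Fin (N + 1)) :
    {x // x ≠ x₀} → Finset (Fin N) :=
  fun x => {i | v.succAbove i ∈ C x}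

lemma isUpperSet_pinnedConstraints {C : α → Finset (Fin (N + 1))} {x : α}
    (hC : IsUpperSet (C x : Set (Fin (N + 1)))) (x₀ : α) (v : Fin (N + 1)) (hx : x ≠ x₀) :
    IsUpperSet (pinnedConstraints C x₀ v ⟨x, hx⟩ : Set (Fin N)) := by
  have h : (pinnedConstraints C x₀ v ⟨x, hx⟩ : Set (Fin N)) = v.succAbove ⁻¹' C x := by
    ext; simp [pinnedConstraints]
  exact h ▸ hC.preimage (Fin.strictMono_succAbove v).monotone

lemma pinnedConstraints_subset {C : α → Finset (Fin (N + 1))} {x : α}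
    (hC : IsUpperSet (C x : Set (Fin (N + 1)))) (x₀ : α) {m k : Fin (N + 1)} (hmk : m ≤ k)
    (hx : x ≠ x₀) : pinnedConstraints C x₀ k ⟨x, hx⟩ ⊆ pinnedConstraints C x₀ m ⟨x, hx⟩ := by
  intro i hi
  simp only [pinnedConstraints, mem_filter, mem_univ, true_and] at hi ⊢
  exact hC (Fin.antitone_succAbove i hmk) hi

variable [DecidableEq α]

def pinEquiv (x₀ : α) (v : Fin (N + 1)) :
    {σ : α ≃ Fin (N + 1) // σ x₀ = v} ≃ ({x // x ≠ x₀} ≃ Fin N) :=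
  ((Equiv.equivCongr (Equiv.optionSubtypeNe x₀).symm (Equiv.refl _)).subtypeEquiv
      (by simp [Equiv.equivCongr])).trans
    ((Equiv.optionSubtype v).trans (Equiv.equivCongr (Equiv.refl _) (finSuccAboveEquiv v).symm))

lemma pinEquiv_symm_apply_self (x₀ : α) (v : Fin (N + 1)) (ρ : {x // x ≠ x₀} ≃ Fin N) :
    ((pinEquiv x₀ v).symm ρ : α ≃ Fin (N + 1)) x₀ = v :=
  ((pinEquiv x₀ v).symm ρ).2

lemma pinEquiv_symm_apply_of_ne (x₀ : α) (v : Fin (N + 1)) (ρ : {x // x ≠ x₀} ≃ Fin N)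
    {x : α} (hx : x ≠ x₀) :
    ((pinEquiv x₀ v).symm ρ : α ≃ Fin (N + 1)) x = v.succAbove (ρ ⟨x, hx⟩) := by
  simp [pinEquiv, Equiv.equivCongr, Equiv.optionSubtypeNe_symm_of_ne hx, finSuccAboveEquiv_apply]

end Pinning

section ConstrainedSum

variable {α : Type*} [DecidableEq α] {N : ℕ}

def MonotoneOutside (J : Finset α) (f : (α ≃ Fin N) → ℝ) : Prop :=
  ∀ σ τ : α ≃ Fin N, (∀ q ∉ J, σ q ≤ τ q) → f σ ≤ f τ

lemma MonotoneOutside.antitone_pin {J : Finset α} {f : (α ≃ Fin (N + 1)) → ℝ}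
    (hf : MonotoneOutside J f) {j₀ : α} (hj₀ : j₀ ∈ J) (ρ : {x // x ≠ j₀} ≃ Fin N) :
    Antitone fun v => f ((pinEquiv j₀ v).symm ρ) := by
  intro m k hmk
  refine hf _ _ fun q hq => ?_
  have hq₀ : q ≠ j₀ := fun h => hq (h ▸ hj₀)
  rw [pinEquiv_symm_apply_of_ne _ _ _ hq₀, pinEquiv_symm_apply_of_ne _ _ _ hq₀]
  exact Fin.antitone_succAbove _ hmk

lemma MonotoneOutside.pin {J : Finset α} {f : (α ≃ Fin (N + 1)) → ℝ} (hf : MonotoneOutside J f)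
    (j₀ : α) (v : Fin (N + 1)) :
    MonotoneOutside (J.subtype (· ≠ j₀)) fun ρ => f ((pinEquiv j₀ v).symm ρ) := by
  intro ρ ρ' h
  refine hf _ _ fun q hq => ?_
  rcases eq_or_ne q j₀ with rfl | hq₀
  · simp only [pinEquiv_symm_apply_self, le_rfl]
  · rw [pinEquiv_symm_apply_of_ne _ _ _ hq₀, pinEquiv_symm_apply_of_ne _ _ _ hq₀]
    exact (Fin.strictMono_succAbove v).monotone (h _ (by simpa using hq))

variable [Fintype α] {J : Finset α}

def constrainedSum (J : Finset α) (C : α → Finset (Fin N)) (f : (α ≃ Fin N) → ℝ) : ℝ :=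
  ∑ σ : α ≃ Fin N with ∀ j ∈ J, σ j ∈ C j, f σ

/-- `E[f | T] ≤ E[f | S]`, cross-multiplied so that it also makes sense when a conditioning event
is empty. -/
def CondMeanLE (J : Finset α) (f : (α ≃ Fin N) → ℝ) (T S : α → Finset (Fin N)) : Prop :=
  constrainedSum J T f * constrainedSum J S 1 ≤ constrainedSum J S f * constrainedSum J T 1

lemma constrainedSum_one_nonneg (J : Finset α) (C : α → Finset (Fin N)) :
    0 ≤ constrainedSum J C 1 :=
  sum_nonneg fun _ _ => zero_le_one

lemma constrainedSum_le_constrainedSum (C : α → Finset (Fin N)) {f g : (α ≃ Fin N) → ℝ}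
    (h : ∀ σ, f σ ≤ g σ) : constrainedSum J C f ≤ constrainedSum J C g :=
  sum_le_sum fun σ _ => h σ

lemma constrainedSum_one_mono {T S : α → Finset (Fin N)} (hTS : ∀ j ∈ J, T j ⊆ S j) :
    constrainedSum J T 1 ≤ constrainedSum J S 1 :=
  sum_le_sum_of_subset_of_nonneg
    (fun σ => by simpa using fun hσ j hj => hTS j hj (hσ j hj)) fun _ _ _ => zero_le_one

lemma constrainedSum_eq_zero_of_one_eq_zero {C : α → Finset (Fin N)}
    (h : constrainedSum J C 1 = 0) (f : (α ≃ Fin N) → ℝ) : constrainedSum J C f = 0 := by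
  refine sum_eq_zero fun σ hσ => ?_
  simp only [constrainedSum, Pi.one_apply, sum_const, nsmul_eq_mul, mul_one, Nat.cast_eq_zero,
    card_eq_zero] at h
  simp [h] at hσ

lemma constrainedSum_congr {C C' : α → Finset (Fin N)} (h : ∀ j ∈ J, C j = C' j)
    (f : (α ≃ Fin N) → ℝ) : constrainedSum J C f = constrainedSum J C' f := by
  unfold constrainedSum
  congr 1
  exact filter_congr fun σ _ => forall₂_congr fun j hj => by rw [h j hj]

lemma constrainedSum_update_eq_sum {j₀ : α} (hj₀ : j₀ ∈ J) (C : α → Finset (Fin N))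
    (s : Finset (Fin N)) (f : (α ≃ Fin N) → ℝ) :
    constrainedSum J (Function.update C j₀ s) f
      = ∑ k ∈ s, constrainedSum J (Function.update C j₀ {k}) f := by
  simp only [constrainedSum, forall_mem_update_iff hj₀, mem_singleton]
  rw [← sum_fiberwise_of_maps_to (g := fun σ : α ≃ Fin N => σ j₀) (t := s)
    (fun σ hσ => (mem_filter.1 hσ).2.1)]
  refine sum_congr rfl fun k hk => ?_
  rw [filter_filter]
  congr 1
  ext σ
  simp only [mem_filter, mem_univ, true_and]
  constructor
  · rintro ⟨⟨-, h⟩, rfl⟩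
    exact ⟨rfl, h⟩
  · rintro ⟨rfl, h⟩
    exact ⟨⟨hk, h⟩, rfl⟩

lemma constrainedSum_update_singleton {j₀ : α} (hj₀ : j₀ ∈ J) (C : α → Finset (Fin (N + 1)))
    (v : Fin (N + 1)) (f : (α ≃ Fin (N + 1)) → ℝ) :
    constrainedSum J (Function.update C j₀ {v}) f
      = constrainedSum (J.subtype (· ≠ j₀)) (pinnedConstraints C j₀ v)
          (fun ρ => f ((pinEquiv j₀ v).symm ρ)) := by
  have hcond : ∀ ρ : {x // x ≠ j₀} ≃ Fin N,
      (∀ j ∈ J, j ≠ j₀ → ((pinEquiv j₀ v).symm ρ : α ≃ Fin (N + 1)) j ∈ C j)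
        ↔ ∀ x ∈ J.subtype (· ≠ j₀), ρ x ∈ pinnedConstraints C j₀ v x := by
    intro ρ
    simp only [pinnedConstraints, mem_subtype, mem_filter, mem_univ, true_and, Subtype.forall]
    constructor
    · intro h x hx hxJ
      rw [← pinEquiv_symm_apply_of_ne]
      exact h x hxJ hx
    · intro h j hj hne
      rw [pinEquiv_symm_apply_of_ne _ _ _ hne]
      exact h j hne hj
  calc constrainedSum J (Function.update C j₀ {v}) f
      = ∑ σ with σ j₀ = v, if ∀ j ∈ J, j ≠ j₀ → σ j ∈ C j then f σ else 0 := by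
        simp only [constrainedSum, forall_mem_update_iff hj₀, mem_singleton]
        rw [← filter_filter, sum_filter]
    _ = ∑ σ : {σ : α ≃ Fin (N + 1) // σ j₀ = v},
          if ∀ j ∈ J, j ≠ j₀ → (σ : α ≃ Fin (N + 1)) j ∈ C j then f σ else 0 :=
        sum_subtype _ (by simp) _
    _ = ∑ ρ : {x // x ≠ j₀} ≃ Fin N, if ∀ j ∈ J, j ≠ j₀ → ((pinEquiv j₀ v).symm ρ :
          α ≃ Fin (N + 1)) j ∈ C j then f ((pinEquiv j₀ v).symm ρ) else 0 :=
        (Equiv.sum_comp (pinEquiv j₀ v).symm fun σ =>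
          if ∀ j ∈ J, j ≠ j₀ → (σ : α ≃ Fin (N + 1)) j ∈ C j then f σ else 0).symm
    _ = _ := by
        rw [constrainedSum, sum_filter]
        exact sum_congr rfl fun ρ _ => if_congr (hcond ρ) rfl rfl

namespace CondMeanLE

variable {f : (α ≃ Fin N) → ℝ}

lemma refl (C : α → Finset (Fin N)) : CondMeanLE J f C C := le_rfl

lemma trans {T M S : α → Finset (Fin N)} (hTM : ∀ j ∈ J, T j ⊆ M j)
    (h₁ : CondMeanLE J f T M) (h₂ : CondMeanLE J f M S) : CondMeanLE J f T S := by
  unfold CondMeanLE at *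
  have hT := constrainedSum_one_nonneg J T
  have hS := constrainedSum_one_nonneg J S
  rcases (constrainedSum_one_nonneg J M).eq_or_lt with hM | hM
  · have hT0 : constrainedSum J T 1 = 0 :=
      le_antisymm (hM ▸ constrainedSum_one_mono hTM) hT
    simp [hT0, constrainedSum_eq_zero_of_one_eq_zero hT0]
  · refine le_of_mul_le_mul_right ?_ hM
    nlinarith [mul_le_mul_of_nonneg_right h₁ hS, mul_le_mul_of_nonneg_right h₂ hT]

end CondMeanLE

lemma condMeanLE_update_singleton {j₀ : α} (hj₀ : j₀ ∈ J) {C : α → Finset (Fin (N + 1))}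
    (hC : ∀ j ∈ J, j ≠ j₀ → IsUpperSet (C j : Set (Fin (N + 1))))
    {f : (α ≃ Fin (N + 1)) → ℝ} (hf : MonotoneOutside J f) {m k : Fin (N + 1)} (hmk : m ≤ k)
    (ih : ∀ {T S : {x // x ≠ j₀} → Finset (Fin N)},
      (∀ x ∈ J.subtype (· ≠ j₀), IsUpperSet (T x : Set (Fin N))) →
      (∀ x ∈ J.subtype (· ≠ j₀), IsUpperSet (S x : Set (Fin N))) →
      (∀ x ∈ J.subtype (· ≠ j₀), T x ⊆ S x) →
      ∀ {g}, MonotoneOutside (J.subtype (· ≠ j₀)) g → CondMeanLE (J.subtype (· ≠ j₀)) g T S) :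
    CondMeanLE J f (Function.update C j₀ {k}) (Function.update C j₀ {m}) := by
  have hup (v : Fin (N + 1)) (x) (hx : x ∈ J.subtype (· ≠ j₀)) :
      IsUpperSet (pinnedConstraints C j₀ v x : Set (Fin N)) :=
    isUpperSet_pinnedConstraints (hC x (mem_subtype.1 hx) x.2) j₀ v x.2
  unfold CondMeanLE
  simp only [constrainedSum_update_singleton hj₀]
  calc _ ≤ _ := mul_le_mul_of_nonneg_right
          (constrainedSum_le_constrainedSum _ fun ρ => hf.antitone_pin hj₀ ρ hmk) (constrainedSum_one_nonneg _ _)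
    _ ≤ _ := ih (hup k) (hup m)
          (fun x hx => pinnedConstraints_subset (hC x (mem_subtype.1 hx) x.2) j₀ hmk x.2)
          (hf.pin j₀ m)

lemma condMeanLE_update_insert {j₀ : α} (hj₀ : j₀ ∈ J) {C : α → Finset (Fin N)}
    {f : (α ≃ Fin N) → ℝ} {m : Fin N} {s : Finset (Fin N)} (hms : m ∉ s)
    (h : ∀ k ∈ s, CondMeanLE J f (Function.update C j₀ {k}) (Function.update C j₀ {m})) :
    CondMeanLE J f (Function.update C j₀ s) (Function.update C j₀ (insert m s)) := by
  unfold CondMeanLE at *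
  rw [constrainedSum_update_eq_sum hj₀ C s, constrainedSum_update_eq_sum hj₀ C s,
    constrainedSum_update_eq_sum hj₀ C (insert m s),
    constrainedSum_update_eq_sum hj₀ C (insert m s), sum_insert hms, sum_insert hms]
  exact sum_mul_le_of_forall_mul_le s (fun k => constrainedSum J (Function.update C j₀ {k}) f)
    (fun k => constrainedSum J (Function.update C j₀ {k}) 1) m h

lemma condMeanLE_update_of_insert_min {j₀ : α} {C : α → Finset (Fin N)} {f : (α ≃ Fin N) → ℝ}
    (h : ∀ m s, (∀ x ∈ s, m < x) →
      CondMeanLE J f (Function.update C j₀ s) (Function.update C j₀ (insert m s)))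
    {U V : Finset (Fin N)} (hU : IsUpperSet (U : Set (Fin N))) (hUV : U ⊆ V) :
    CondMeanLE J f (Function.update C j₀ U) (Function.update C j₀ V) := by
  induction V using Finset.induction_on_min with
  | empty => rw [subset_empty.1 hUV]; exact .refl _
  | insert m s hms ih =>
    by_cases hUs : U ⊆ s
    · exact (ih hUs).trans (fun j _ => update_subset_update C j₀ hUs j) (h m s hms)
    · have hmU : m ∈ U := by
        by_contra hmU
        exact hUs fun x hx => (mem_insert.1 (hUV hx)).resolve_left (by rintro rfl; exact hmU hx)
      have : insert m s = U := (subset_antisymm hUV fun x hx => ?_).symm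
      · rw [this]; exact .refl _
      · rcases mem_insert.1 hx with rfl | hx
        · exact hmU
        · exact hU (hms x hx).le hmU

lemma condMeanLE_of_forall_update {f : (α ≃ Fin N) → ℝ}
    (hstep : ∀ j₀ ∈ J, ∀ C : α → Finset (Fin N),
      (∀ j ∈ J, j ≠ j₀ → IsUpperSet (C j : Set (Fin N))) → ∀ U V : Finset (Fin N), IsUpperSet (U : Set (Fin N)) → U ⊆ V →
        CondMeanLE J f (Function.update C j₀ U) (Function.update C j₀ V))
    {T S : α → Finset (Fin N)} (hT : ∀ j ∈ J, IsUpperSet (T j : Set (Fin N)))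
    (hS : ∀ j ∈ J, IsUpperSet (S j : Set (Fin N))) (hTS : ∀ j ∈ J, T j ⊆ S j) :
    CondMeanLE J f T S := by
  suffices h : ∀ D ⊆ J, CondMeanLE J f T (D.piecewise S T) by
    have hJ := h J subset_rfl
    unfold CondMeanLE at hJ ⊢
    simpa only [constrainedSum_congr fun j hj => J.piecewise_eq_of_mem S T hj] using hJ
  intro D
  induction D using Finset.induction_on with
  | empty => intro _; rw [piecewise_empty]; exact .refl T
  | insert d D hdD ih =>
    intro hDJ
    have hdJ := hDJ (mem_insert_self d D)
    have hd := hstep d hdJ (D.piecewise S T)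
      (fun j hj _ => by by_cases hjD : j ∈ D <;> simp [hjD, hT j hj, hS j hj])
      (T d) (S d) (hT d hdJ) (hTS d hdJ)
    rw [Function.update_eq_self_iff.2 (D.piecewise_eq_of_notMem S T hdD).symm,
      ← piecewise_insert] at hd
    refine (ih ((subset_insert d D).trans hDJ)).trans (fun j hj => ?_) hd
    by_cases hjD : j ∈ D <;> simp [hjD, hTS j hj]

theorem condMeanLE_of_isUpperSet {T S : α → Finset (Fin N)}
    (hT : ∀ j ∈ J, IsUpperSet (T j : Set (Fin N))) (hS : ∀ j ∈ J, IsUpperSet (S j : Set (Fin N)))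
    (hTS : ∀ j ∈ J, T j ⊆ S j) {f : (α ≃ Fin N) → ℝ} (hf : MonotoneOutside J f) :
    CondMeanLE J f T S := by
  induction N generalizing α with
  | zero =>
    refine condMeanLE_of_forall_update (fun _ _ _ _ _ _ hU hUV => ?_) hT hS hTS
    exact condMeanLE_update_of_insert_min (fun m => m.elim0) hU hUV
  | succ N ih =>
    refine condMeanLE_of_forall_update (fun j₀ hj₀ C hC U V hU hUV => ?_) hT hS hTS
    refine condMeanLE_update_of_insert_min (fun m s hms => ?_) hU hUV
    refine condMeanLE_update_insert hj₀ (fun hm => lt_irrefl m (hms m hm)) fun k hk => ?_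
    exact condMeanLE_update_singleton hj₀ hC hf (hms k hk).le ih

end ConstrainedSum

section PermutationDistribution

variable {n : ℕ}

def strictSuperlevel (b : Fin n → ℝ) (t : ℝ) : Finset (Fin n) := {v | t < b v}

lemma isUpperSet_strictSuperlevel {b : Fin n → ℝ} (hb : Monotone b) (t : ℝ) :
    IsUpperSet (strictSuperlevel b t : Set (Fin n)) := fun _ _ huv hu => by
  simp only [strictSuperlevel, mem_coe, mem_filter, mem_univ, true_and] at hu ⊢
  exact hu.trans_le (hb huv)

lemma strictSuperlevel_antitone (b : Fin n → ℝ) : Antitone (strictSuperlevel b) :=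
  fun _ _ hst _ hv => by
    simp only [strictSuperlevel, mem_filter, mem_univ, true_and] at hv ⊢
    exact hst.trans_lt hv

lemma pr_unifPerm_permVec (a x : Fin n → ℝ) (J : Finset (Fin n)) :
    Pr (unifPerm n) (fun σ => ∀ j ∈ J, x j < permVec a σ j)
      = (n.factorial : ℝ)⁻¹
        * constrainedSum J (fun j => strictSuperlevel (a ∘ Tuple.sort a) (x j)) 1 := by
  rw [Pr, constrainedSum, sum_filter, mul_sum, ← Equiv.sum_comp (Equiv.mulLeft (Tuple.sort a))]
  refine sum_congr rfl fun ρ _ => ?_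
  simp only [unifPerm, strictSuperlevel, mem_filter, mem_univ, true_and, Function.comp_apply,
    mul_ite, mul_zero, mul_one, Pi.one_apply, Equiv.coe_mulLeft, Equiv.Perm.mul_apply, permVec]
  -- the two `if`s differ only in their `Decidable` instances
  congr

lemma cExp_unifPerm_permVec (a x : Fin n → ℝ) (J : Finset (Fin n)) (h : (Fin n → ℝ) → ℝ) :
    CExp (unifPerm n) (fun σ => ∀ j ∈ J, x j < permVec a σ j) (fun σ => h (permVec a σ))
      = constrainedSum J (fun j => strictSuperlevel (a ∘ Tuple.sort a) (x j))
          (fun ρ => h (a ∘ Tuple.sort a ∘ ρ))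
        / constrainedSum J (fun j => strictSuperlevel (a ∘ Tuple.sort a) (x j)) 1 := by
  rw [CExp, pr_unifPerm_permVec, ← mul_div_mul_left (constrainedSum J _ _) _
    (by positivity : (n.factorial : ℝ)⁻¹ ≠ 0)]
  congr 1
  rw [constrainedSum, sum_filter, mul_sum, ← Equiv.sum_comp (Equiv.mulLeft (Tuple.sort a))]
  refine sum_congr rfl fun ρ _ => ?_
  simp only [unifPerm, strictSuperlevel, mem_filter, mem_univ, true_and, Function.comp_apply,
    mul_ite, mul_zero, Equiv.coe_mulLeft, Equiv.Perm.mul_apply, permVec]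
  congr

end PermutationDistribution

theorem permutation_distribution_isNRTD_general (n : ℕ) (a : Fin n → ℝ) :
    IsNRTD (unifPerm n) (permVec a) := by
  intro I J hIJ x y hxy hPx hPy φ hφ _
  set b := a ∘ Tuple.sort a
  have hb : Monotone b := Tuple.monotone_sort a
  have key : CondMeanLE J (fun ρ => φ fun i => b (ρ i))
      (fun j => strictSuperlevel b (y j)) (fun j => strictSuperlevel b (x j)) :=
    condMeanLE_of_isUpperSet (fun j _ => isUpperSet_strictSuperlevel hb (y j))
      (fun j _ => isUpperSet_strictSuperlevel hb (x j))
      (fun j hj => strictSuperlevel_antitone b (hxy j hj))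
      fun σ τ hστ => hφ fun i => hb (hστ i (disjoint_left.1 hIJ i.2))
  rw [pr_unifPerm_permVec] at hPx hPy
  rw [cExp_unifPerm_permVec a y J fun v => φ fun i => v i,
    cExp_unifPerm_permVec a x J fun v => φ fun i => v i,
    div_le_div_iff₀ (pos_of_mul_pos_right hPy (by positivity))
      (pos_of_mul_pos_right hPx (by positivity))]
  exact key

/-- A random vector with the permutation distribution on any
`a ∈ ℝ^n` (`n ≥ 2`) is negatively right-tail dependent (NRTD). -/
theorem permutation_distribution_isNRTD (n : ℕ) (hn : 2 ≤ n) (a : Fin n → ℝ) :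
    IsNRTD (unifPerm n) (permVec a) :=
  permutation_distribution_isNRTD_general n a
end
end

section
/- Let Λ ⊆ ℝ and let (μ_λ)_{λ∈Λ} be a family of probability distributions on ℝ that is stochastically increasing in λ (i.e., λ ≤ λ′ implies μ_λ ≤_st μ_{λ′}). Let ψ: ℝ^n → ℝ be a bounded measurable supermodular function, and define g(λ_1, …, λ_n) = ∫ ψ d(μ_{λ_1} ⊗ μ_{λ_2} ⊗ ⋯ ⊗ μ_{λ_n}), i.e., g(λ_1,…,λ_n) = E[ψ(X_{1,λ_1}, …, X_{n,λ_n})] where X_{1,λ_1}, …, X_{n,λ_n} are independent with X_{i,λ_i} ~ μ_{λ_i}. Then g is supermodular on Λ^n. -/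
/-!
Induct on `n`, integrating out the first coordinate. For `M : Fin k → ι` put
`G M y = ∫ ψ (Fin.cons y z) d(⊗ⱼ μ (M j))(z)`. The induction hypothesis, applied to the
sections of `ψ`, makes `M ↦ G M y` supermodular for every `y`. Supermodularity of `ψ` makes
`z ↦ ψ (cons y' z) - ψ (cons y z)` increasing when `y ≤ y'`, and product measures of
stochastically ordered factors are stochastically ordered, so `y ↦ G M' y - G M y` is increasing
when `M ≤ M'`. If `l 0 ≤ l' 0`, integrating the first fact against `μ (l 0)` and comparing the
second under `μ (l 0) ≤ₛₜ μ (l' 0)` gives the inequality.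
-/
open MeasureTheory

def Supermodular {β : Type*} [Lattice β] (f : β → ℝ) : Prop :=
  ∀ x y, f x + f y ≤ f (x ⊔ y) + f (x ⊓ y)

/-- The stochastic order `κ ≤ₛₜ ν`. On `ℝ` every monotone function is measurable, so the
measurability requirement only matters for other ordered spaces. -/
def StochasticallyLE {α : Type*} [MeasurableSpace α] [Preorder α] (κ ν : Measure α) : Prop :=
  ∀ φ : α → ℝ, Measurable φ → Monotone φ → (∃ C, ∀ x, |φ x| ≤ C) → ∫ x, φ x ∂κ ≤ ∫ x, φ x ∂ν

section Lattice

variable {α : Type*} [Lattice α] {k : ℕ}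

theorem Fin.cons_sup_cons (a b : α) (x y : Fin k → α) :
    (Fin.cons a x : Fin (k + 1) → α) ⊔ Fin.cons b y = Fin.cons (a ⊔ b) (x ⊔ y) := by
  ext i
  cases i using Fin.cases <;> rfl

theorem Fin.cons_inf_cons (a b : α) (x y : Fin k → α) :
    (Fin.cons a x : Fin (k + 1) → α) ⊓ Fin.cons b y = Fin.cons (a ⊓ b) (x ⊓ y) := by
  ext i
  cases i using Fin.cases <;> rfl

theorem Supermodular.comp_cons {f : (Fin (k + 1) → α) → ℝ} (hf : Supermodular f) (a : α) :
    Supermodular fun z => f (Fin.cons a z) := fun x y => by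
  simpa only [Fin.cons_sup_cons, Fin.cons_inf_cons, sup_idem, inf_idem] using
    hf (Fin.cons a x) (Fin.cons a y)

theorem Supermodular.monotone_cons_sub {f : (Fin (k + 1) → α) → ℝ} (hf : Supermodular f)
    {a b : α} (hab : a ≤ b) : Monotone fun z => f (Fin.cons b z) - f (Fin.cons a z) := by
  intro z z' hz
  have := hf (Fin.cons b z) (Fin.cons a z')
  rw [Fin.cons_sup_cons, Fin.cons_inf_cons, sup_eq_left.2 hab, inf_eq_right.2 hab,
    sup_eq_right.2 hz, inf_eq_left.2 hz] at this
  linarith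

end Lattice

section Integral

variable {α : Type*} [MeasurableSpace α] {μ : Measure α}

theorem integrable_of_abs_le [IsFiniteMeasure μ] {f : α → ℝ} (hf : Measurable f) {C : ℝ}
    (hC : ∀ x, |f x| ≤ C) : Integrable f μ :=
  .of_bound hf.aestronglyMeasurable C (ae_of_all _ fun x => (Real.norm_eq_abs _).trans_le (hC x))

theorem abs_integral_le_of_abs_le [IsProbabilityMeasure μ] {f : α → ℝ} {C : ℝ}
    (hC : ∀ x, |f x| ≤ C) : |∫ x, f x ∂μ| ≤ C := by
  simpa using norm_integral_le_of_norm_le_const (μ := μ)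
    (ae_of_all _ fun x => (Real.norm_eq_abs (f x)).trans_le (hC x))

theorem measurable_fin_cons {k : ℕ} :
    Measurable fun p : α × (Fin k → α) => (Fin.cons p.1 p.2 : Fin (k + 1) → α) := by
  refine measurable_pi_iff.2 fun i => ?_
  cases i using Fin.cases with
  | zero => exact measurable_fst
  | succ j => exact (measurable_pi_apply j).comp measurable_snd

theorem integral_pi_fin_succ {k : ℕ} (ρ : Fin (k + 1) → Measure α) [∀ i, SigmaFinite (ρ i)]
    {f : (Fin (k + 1) → α) → ℝ} (hf : Integrable f (Measure.pi ρ)) :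
    ∫ x, f x ∂Measure.pi ρ = ∫ y, ∫ z, f (Fin.cons y z) ∂Measure.pi (fun j => ρ j.succ) ∂ρ 0 := by
  have e := (measurePreserving_piFinSuccAbove ρ 0).symm
  rw [← e.integral_comp', integral_prod]
  · simp [MeasurableEquiv.piFinSuccAbove_symm_apply, Fin.insertNthEquiv, Fin.insertNth_zero']
  · exact (e.integrable_comp_emb (MeasurableEquiv.measurableEmbedding _)).2 hf

end Integral

section Stochastic

variable {α : Type*} [MeasurableSpace α]

theorem Measurable.integral_fin_cons {k : ℕ} {f : (Fin (k + 1) → α) → ℝ} (hf : Measurable f)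
    (P : Measure (Fin k → α)) [SFinite P] : Measurable fun y => ∫ z, f (Fin.cons y z) ∂P :=
  ((hf.comp measurable_fin_cons).stronglyMeasurable.integral_prod_right' (ν := P)).measurable

theorem Measurable.comp_fin_cons {k : ℕ} {f : (Fin (k + 1) → α) → ℝ} (hf : Measurable f) (y : α) :
    Measurable fun z => f (Fin.cons y z) :=
  hf.comp (measurable_fin_cons.comp measurable_prodMk_left)

variable [Preorder α]

theorem StochasticallyLE.pi : ∀ {k : ℕ} {κ ν : Fin k → Measure α}
    [∀ i, IsProbabilityMeasure (κ i)] [∀ i, IsProbabilityMeasure (ν i)],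
    (∀ i, StochasticallyLE (κ i) (ν i)) → StochasticallyLE (Measure.pi κ) (Measure.pi ν)
  | 0, κ, ν, _, _, _ => fun φ _ _ _ => by rw [Measure.pi_of_empty, Measure.pi_of_empty]
  | k + 1, κ, ν, _, _, h => by
    rintro φ hφ hmono ⟨C, hC⟩
    set A := fun y => ∫ z, φ (Fin.cons y z) ∂Measure.pi fun j => κ j.succ
    set B := fun y => ∫ z, φ (Fin.cons y z) ∂Measure.pi fun j => ν j.succ
    have hA : Integrable A (κ 0) :=
      integrable_of_abs_le (hφ.integral_fin_cons _) fun y => abs_integral_le_of_abs_le fun z => hC _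
    have hB : Integrable B (κ 0) :=
      integrable_of_abs_le (hφ.integral_fin_cons _) fun y => abs_integral_le_of_abs_le fun z => hC _
    have hAB : ∀ y, A y ≤ B y := fun y =>
      StochasticallyLE.pi (fun j => h j.succ) _ (hφ.comp_fin_cons y)
        (fun z z' hz => hmono (Fin.cons_le_cons.2 ⟨le_rfl, hz⟩)) ⟨C, fun z => hC _⟩
    have hBmono : Monotone B := fun y y' hy =>
      integral_mono (integrable_of_abs_le (hφ.comp_fin_cons y) fun z => hC _)
        (integrable_of_abs_le (hφ.comp_fin_cons y') fun z => hC _)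
        fun z => hmono (Fin.cons_le_cons.2 ⟨hy, le_rfl⟩)
    rw [integral_pi_fin_succ κ (integrable_of_abs_le hφ hC),
      integral_pi_fin_succ ν (integrable_of_abs_le hφ hC)]
    calc ∫ y, A y ∂κ 0 ≤ ∫ y, B y ∂κ 0 := integral_mono hA hB hAB
      _ ≤ ∫ y, B y ∂ν 0 := h 0 B (hφ.integral_fin_cons _) hBmono
          ⟨C, fun y => abs_integral_le_of_abs_le fun z => hC _⟩

end Stochastic

section Supermodular

variable {α : Type*} [MeasurableSpace α] [Lattice α]

theorem Supermodular.monotone_integral_cons_sub {k : ℕ} {f : (Fin (k + 1) → α) → ℝ}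
    (hf : Supermodular f) (hmeas : Measurable f) {C : ℝ} (hC : ∀ x, |f x| ≤ C)
    {κ ν : Measure (Fin k → α)} [IsProbabilityMeasure κ] [IsProbabilityMeasure ν] (h : StochasticallyLE κ ν) :
    Monotone fun y => ∫ z, f (Fin.cons y z) ∂ν - ∫ z, f (Fin.cons y z) ∂κ := by
  intro y y' hy
  have hsub : ∀ P : Measure (Fin k → α), [IsProbabilityMeasure P] →
      ∫ z, f (Fin.cons y' z) ∂P - ∫ z, f (Fin.cons y z) ∂P =
        ∫ z, f (Fin.cons y' z) - f (Fin.cons y z) ∂P := fun P _ =>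
    (integral_sub (integrable_of_abs_le (hmeas.comp_fin_cons y') fun z => hC _)
      (integrable_of_abs_le (hmeas.comp_fin_cons y) fun z => hC _)).symm
  have := h (fun z => f (Fin.cons y' z) - f (Fin.cons y z))
    ((hmeas.comp_fin_cons y').sub (hmeas.comp_fin_cons y)) (hf.monotone_cons_sub hy)
    ⟨C + C, fun z => (abs_sub _ _).trans (add_le_add (hC _) (hC _))⟩
  rw [← hsub, ← hsub] at this
  linarith

theorem Supermodular.integral_pi {ι : Type*} [LinearOrder ι] {μ : ι → Measure α}
    [∀ i, IsProbabilityMeasure (μ i)]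
    (hμ : ∀ a b, a ≤ b → StochasticallyLE (μ a) (μ b)) :
    ∀ {n : ℕ} {ψ : (Fin n → α) → ℝ}, Measurable ψ → (∃ C, ∀ x, |ψ x| ≤ C) → Supermodular ψ →
      Supermodular fun l : Fin n → ι => ∫ x, ψ x ∂Measure.pi fun i => μ (l i)
  | 0, ψ, _, _, _ => fun l l' => by
    rw [Subsingleton.elim (l ⊔ l') l, Subsingleton.elim (l ⊓ l') l, Subsingleton.elim l' l]
  | k + 1, ψ, hψ, ⟨C, hC⟩, hsm => by
    intro l l'
    wlog hle : l 0 ≤ l' 0 generalizing l l'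
    · have := this l' l (le_of_not_ge hle)
      rwa [sup_comm, inf_comm, add_comm] at this
    set L := Fin.tail l
    set L' := Fin.tail l'
    set G : (Fin k → ι) → α → ℝ := fun M y => ∫ z, ψ (Fin.cons y z) ∂Measure.pi fun j => μ (M j)
    have hGmeas : ∀ M, Measurable (G M) := fun M => hψ.integral_fin_cons _
    have hGbdd : ∀ M y, |G M y| ≤ C := fun M y => abs_integral_le_of_abs_le fun z => hC _
    have hGint : ∀ M a, Integrable (G M) (μ a) := fun M a =>
      integrable_of_abs_le (hGmeas M) (hGbdd M)
    have hsplit : ∀ m : Fin (k + 1) → ι,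
        ∫ x, ψ x ∂Measure.pi (fun i => μ (m i)) = ∫ y, G (Fin.tail m) y ∂μ (m 0) := fun m =>
      integral_pi_fin_succ _ (integrable_of_abs_le hψ hC)
    have hsection : ∀ y, G L y + G L' y ≤ G (L ⊔ L') y + G (L ⊓ L') y := fun y =>
      Supermodular.integral_pi hμ (hψ.comp_fin_cons y) ⟨C, fun z => hC _⟩ (hsm.comp_cons y) L L'
    have hincr : Monotone fun y => G (L ⊔ L') y - G L' y :=
      hsm.monotone_integral_cons_sub hψ hC (StochasticallyLE.pi fun j => hμ _ _ le_sup_right)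
    dsimp only
    rw [hsplit l, hsplit l', hsplit (l ⊔ l'), hsplit (l ⊓ l')]
    simp only [Pi.sup_apply, Pi.inf_apply, sup_eq_right.2 hle, inf_eq_left.2 hle]
    change ∫ y, G L y ∂μ (l 0) + ∫ y, G L' y ∂μ (l' 0) ≤
      ∫ y, G (L ⊔ L') y ∂μ (l' 0) + ∫ y, G (L ⊓ L') y ∂μ (l 0)
    have hfirst : ∫ y, G L y ∂μ (l 0) ≤
        ∫ y, G (L ⊓ L') y ∂μ (l 0) + ∫ y, G (L ⊔ L') y - G L' y ∂μ (l 0) := by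
      rw [← integral_add (g := fun y => G (L ⊔ L') y - G L' y) (hGint _ _)
        ((hGint _ _).sub (hGint _ _))]
      exact integral_mono (hGint _ _) ((hGint _ _).add ((hGint _ _).sub (hGint _ _)))
        fun y => by linarith [hsection y]
    have hsecond : ∫ y, G (L ⊔ L') y - G L' y ∂μ (l 0) ≤
        ∫ y, G (L ⊔ L') y - G L' y ∂μ (l' 0) :=
      hμ _ _ hle _ ((hGmeas _).sub (hGmeas _)) hincr
        ⟨C + C, fun y => (abs_sub _ _).trans (add_le_add (hGbdd _ y) (hGbdd _ y))⟩
    rw [integral_sub (hGint _ (l' 0)) (hGint _ (l' 0))] at hsecond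
    linarith

end Supermodular

/-- If `(μ_λ)_{λ∈Λ}` is a family of probability measures on `ℝ` that is
stochastically increasing in `λ`, and `ψ : ℝ^n → ℝ` is bounded, measurable and
supermodular, then `g(λ₁,…,λₙ) = ∫ ψ d(μ_{λ₁} ⊗ ⋯ ⊗ μ_{λₙ})` is supermodular
on `Λ^n`. -/
theorem integral_supermodular_of_stochastically_increasing (n : ℕ) (Λ : Set ℝ)
    (μ : ℝ → Measure ℝ) (hprob : ∀ l ∈ Λ, IsProbabilityMeasure (μ l))
    (hsi : ∀ l ∈ Λ, ∀ l' ∈ Λ, l ≤ l' → ∀ φ : ℝ → ℝ, Monotone φ →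
      (∃ C, ∀ x, |φ x| ≤ C) → ∫ x, φ x ∂(μ l) ≤ ∫ x, φ x ∂(μ l'))
    (ψ : (Fin n → ℝ) → ℝ) (hψmeas : Measurable ψ) (hψbdd : ∃ C, ∀ x, |ψ x| ≤ C)
    (hψsm : ∀ x y : Fin n → ℝ, ψ x + ψ y ≤ ψ (x ⊔ y) + ψ (x ⊓ y)) :
    ∀ l l' : Fin n → ℝ, (∀ i, l i ∈ Λ) → (∀ i, l' i ∈ Λ) →
      (∫ x, ψ x ∂(Measure.pi fun i => μ (l i)))
          + (∫ x, ψ x ∂(Measure.pi fun i => μ (l' i)))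
        ≤ (∫ x, ψ x ∂(Measure.pi fun i => μ ((l ⊔ l') i)))
          + (∫ x, ψ x ∂(Measure.pi fun i => μ ((l ⊓ l') i))) := by
  intro l l' hl hl'
  have : ∀ a : Λ, IsProbabilityMeasure (μ a) := fun a => hprob a a.2
  have hsupermod := Supermodular.integral_pi (μ := fun a : Λ => μ a)
    (fun a b hab φ _ hφ hbdd => hsi a a.2 b b.2 hab φ hφ hbdd) hψmeas hψbdd hψsm
    (fun i => ⟨l i, hl i⟩) (fun i => ⟨l' i, hl' i⟩)
  have hcoe := Subtype.mono_coe (· ∈ Λ)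
  simpa only [Pi.sup_apply, Pi.inf_apply, hcoe.map_sup, hcoe.map_inf] using hsupermod
end

section
/- Let X^(1), …, X^(m) be random vectors in ℝ^n, each taking finitely many values, on a common probability space, and set S_i^(k) = Σ_{ν=1}^k X_i^(ν) with S^(0) = 0. Assume: (i) for each k, conditionally on S^(k−1), the vector X^(k) is negatively associated (i.e., for every value s of S^(k−1) with positive probability, the conditional law of X^(k) given S^(k−1)=s is NA); (ii) for each k and each I ⊆ {1,…,n}, the conditional distribution of X_I^(k) given S^(k−1) coincides with its conditional distribution given S_I^(k−1) (it depends only on S_I^(k−1)); (iii) for each k and each I ⊆ {1,…,n}, the conditional law of X_I^(k) given S_I^(k−1) = s_I is stochastically increasing in s_I. Then S^(k) = (S_1^(k), …, S_n^(k)) is negatively associated for every k ∈ {1,…,m}. -/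
/-! Induction on `k`, writing `S^(k) = T + X` with `T = S^(k-1)` already negatively associated.
Condition on the finitely many values `s` of `T`. By (ii), the conditional mean of
`ψⱼ(s_{Aⱼ} + X_{Aⱼ})` given `T = s` is a function `gⱼ(s_{Aⱼ})`, and by (iii) together with the
monotonicity of `ψⱼ` it is increasing on the values `T` actually takes; extend it to a bounded
increasing function on all of `ℝ^{Aⱼ}`. Conditional NA of `X` gives
`E[ψ₁ ψ₂(T + X)] ≤ E[g₁(T_{A₁}) g₂(T_{A₂})]`, NA of `T` bounds this by
`E[g₁(T_{A₁})] E[g₂(T_{A₂})]`, and the tower property identifies the last two factors with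
`E[ψ₁(T + X)]` and `E[ψ₂(T + X)]`. -/

open MeasureTheory ProbabilityTheory
open scoped Classical

noncomputable section

/-- A random vector `X = (X_1,…,X_n)` is negatively associated (NA) under the
probability measure `μ`: for disjoint `A₁, A₂ ⊆ {1,…,n}` and bounded coordinatewise
increasing `ψ₁, ψ₂`, `Cov(ψ₁(X_{A₁}), ψ₂(X_{A₂})) ≤ 0`, i.e.
`E[ψ₁(X_{A₁}) ψ₂(X_{A₂})] ≤ E[ψ₁(X_{A₁})] E[ψ₂(X_{A₂})]`. -/
def IsNA {Ω : Type*} [MeasurableSpace Ω] (μ : Measure Ω) {n : ℕ}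
    (X : Ω → Fin n → ℝ) : Prop :=
  ∀ A₁ A₂ : Finset (Fin n), Disjoint A₁ A₂ →
    ∀ ψ₁ : ({i : Fin n // i ∈ A₁} → ℝ) → ℝ, ∀ ψ₂ : ({i : Fin n // i ∈ A₂} → ℝ) → ℝ,
      Monotone ψ₁ → Monotone ψ₂ → (∃ C, ∀ v, |ψ₁ v| ≤ C) → (∃ C, ∀ v, |ψ₂ v| ≤ C) →
      ∫ ω, (ψ₁ fun i => X ω i.1) * (ψ₂ fun i => X ω i.1) ∂μ
        ≤ (∫ ω, (ψ₁ fun i => X ω i.1) ∂μ) * ∫ ω, (ψ₂ fun i => X ω i.1) ∂μ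

theorem Set.Finite.range_add {α M : Type*} [Add M] {f g : α → M} (hf : (Set.range f).Finite)
    (hg : (Set.range g).Finite) : (Set.range (f + g)).Finite :=
  (hf.image2 (· + ·) hg).subset <| by
    rintro _ ⟨ω, rfl⟩
    exact Set.mem_image2_of_mem ⟨ω, rfl⟩ ⟨ω, rfl⟩

section FiniteRange

variable {Ω β : Type*} [MeasurableSpace Ω] [MeasurableSpace β] [MeasurableSingletonClass β]
  {μ : Measure Ω}

theorem measurable_comp_of_finite_range {Y : Ω → β} (hY : Measurable Y)
    (hfin : (Set.range Y).Finite) (φ : β → ℝ) : Measurable fun ω => φ (Y ω) := by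
  have := hfin.countable.to_subtype
  exact (measurable_of_countable fun b : Set.range Y => φ b).comp
    (hY.subtype_mk (h := Set.mem_range_self))

theorem integrable_comp_of_finite_range [IsFiniteMeasure μ] {Y : Ω → β} (hY : Measurable Y)
    (hfin : (Set.range Y).Finite) (φ : β → ℝ) : Integrable (fun ω => φ (Y ω)) μ := by
  obtain ⟨C, hC⟩ := (hfin.image fun b => ‖φ b‖).bddAbove
  exact .of_bound (measurable_comp_of_finite_range hY hfin φ).aestronglyMeasurable C
    (.of_forall fun ω => hC ⟨Y ω, ⟨ω, rfl⟩, rfl⟩)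

theorem integral_eq_sum_setIntegral_fiber {Y : Ω → β} (hY : Measurable Y)
    (hfin : (Set.range Y).Finite) {f : Ω → ℝ} (hf : Integrable f μ) :
    ∫ ω, f ω ∂μ = ∑ b ∈ hfin.toFinset, ∫ ω in Y ⁻¹' {b}, f ω ∂μ := by
  rw [← integral_biUnion_finset _ (fun b _ => hY (measurableSet_singleton b))
    (Set.pairwiseDisjoint_fiber Y _) fun b _ => hf.integrableOn]
  have hcover : ⋃ b ∈ hfin.toFinset, Y ⁻¹' {b} = Set.univ := by
    ext ω; simp
  rw [hcover, setIntegral_univ]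

theorem integral_comp_eq_of_map_eq {ν : Measure Ω} [IsFiniteMeasure μ] [IsFiniteMeasure ν]
    {Y : Ω → β} (hY : Measurable Y) (hfin : (Set.range Y).Finite)
    (hmap : μ.map Y = ν.map Y) (φ : β → ℝ) : ∫ ω, φ (Y ω) ∂μ = ∫ ω, φ (Y ω) ∂ν := by
  have hfiber : ∀ (ρ : Measure Ω) [IsFiniteMeasure ρ], ∫ ω, φ (Y ω) ∂ρ
      = ∑ b ∈ hfin.toFinset, (ρ.map Y).real {b} * φ b := fun ρ _ => by
    rw [integral_eq_sum_setIntegral_fiber hY hfin (integrable_comp_of_finite_range hY hfin φ)]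
    refine Finset.sum_congr rfl fun b _ => ?_
    rw [setIntegral_congr_fun (hY (measurableSet_singleton b)) fun ω (hω : Y ω = b) => by rw [hω],
      setIntegral_const, smul_eq_mul, map_measureReal_apply hY (measurableSet_singleton b)]
  rw [hfiber μ, hfiber ν, hmap]

end FiniteRange

section Fibers

variable {Ω β : Type*} [MeasurableSpace Ω] [MeasurableSpace β] [MeasurableSingletonClass β]
  {μ : Measure Ω} [IsFiniteMeasure μ]

theorem measureReal_mul_integral_cond (A : Set Ω) (f : Ω → ℝ) :
    μ.real A * ∫ ω, f ω ∂μ[|A] = ∫ ω in A, f ω ∂μ := by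
  rcases eq_or_ne (μ A) 0 with hA | hA
  · simp [Measure.restrict_eq_zero.2 hA, measureReal_def, hA]
  · rw [ProbabilityTheory.cond, integral_smul_measure, smul_eq_mul, ← mul_assoc, ENNReal.toReal_inv,
      measureReal_def, mul_inv_cancel₀ (ENNReal.toReal_ne_zero.2 ⟨hA, measure_ne_top μ A⟩),
      one_mul]

theorem integral_eq_sum_measureReal_mul_integral_cond {T : Ω → β} (hT : Measurable T)
    (hfin : (Set.range T).Finite) {f : β → Ω → ℝ} (hf : Integrable (fun ω => f (T ω) ω) μ) :
    ∫ ω, f (T ω) ω ∂μ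
      = ∑ b ∈ hfin.toFinset, μ.real (T ⁻¹' {b}) * ∫ ω, f b ω ∂μ[|T ⁻¹' {b}] := by
  rw [integral_eq_sum_setIntegral_fiber hT hfin hf]
  refine Finset.sum_congr rfl fun b _ => ?_
  rw [measureReal_mul_integral_cond]
  exact setIntegral_congr_fun (hT (measurableSet_singleton b)) fun ω (hω : T ω = b) => by rw [hω]

theorem integral_le_integral_of_cond_fiber {T : Ω → β} (hT : Measurable T)
    (hfin : (Set.range T).Finite) {f g : β → Ω → ℝ} (hf : Integrable (fun ω => f (T ω) ω) μ)
    (hg : Integrable (fun ω => g (T ω) ω) μ)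
    (hfg : ∀ b, μ (T ⁻¹' {b}) ≠ 0 → ∫ ω, f b ω ∂μ[|T ⁻¹' {b}] ≤ ∫ ω, g b ω ∂μ[|T ⁻¹' {b}]) :
    ∫ ω, f (T ω) ω ∂μ ≤ ∫ ω, g (T ω) ω ∂μ := by
  rw [integral_eq_sum_measureReal_mul_integral_cond hT hfin hf,
    integral_eq_sum_measureReal_mul_integral_cond hT hfin hg]
  refine Finset.sum_le_sum fun b _ => ?_
  rcases eq_or_ne (μ (T ⁻¹' {b})) 0 with hb | hb
  · simp [measureReal_def, hb]
  · exact mul_le_mul_of_nonneg_left (hfg b hb) measureReal_nonneg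

theorem integral_eq_integral_of_cond_fiber {T : Ω → β} (hT : Measurable T)
    (hfin : (Set.range T).Finite) {f g : β → Ω → ℝ} (hf : Integrable (fun ω => f (T ω) ω) μ)
    (hg : Integrable (fun ω => g (T ω) ω) μ)
    (hfg : ∀ b, μ (T ⁻¹' {b}) ≠ 0 → ∫ ω, f b ω ∂μ[|T ⁻¹' {b}] = ∫ ω, g b ω ∂μ[|T ⁻¹' {b}]) :
    ∫ ω, f (T ω) ω ∂μ = ∫ ω, g (T ω) ω ∂μ :=
  le_antisymm (integral_le_integral_of_cond_fiber hT hfin hf hg fun b hb => (hfg b hb).le)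
    (integral_le_integral_of_cond_fiber hT hfin hg hf fun b hb => (hfg b hb).ge)

end Fibers

theorem exists_monotone_bounded_extension {β α : Type*} [Preorder α] (r : β → α) (P : Finset β)
    (F : β → ℝ) {C : ℝ} (hC : 0 ≤ C) (hFC : ∀ b ∈ P, |F b| ≤ C)
    (hF : ∀ b ∈ P, ∀ b' ∈ P, r b ≤ r b' → F b ≤ F b') :
    ∃ g : α → ℝ, Monotone g ∧ (∀ a, |g a| ≤ C) ∧ ∀ b ∈ P, g (r b) = F b := by
  let V : α → Finset ℝ := fun a => insert (-C) ((P.filter (r · ≤ a)).image F)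
  have hV : ∀ a, (V a).Nonempty := fun a => Finset.insert_nonempty _ _
  refine ⟨fun a => (V a).max' (hV a), fun a a' haa' => ?_, fun a => ?_, fun b hb => ?_⟩
  · refine Finset.max'_subset _ (Finset.insert_subset_insert _ (Finset.image_subset_image ?_))
    exact Finset.monotone_filter_right _ fun _ _ h => h.trans haa'
  · refine abs_le.2 ⟨(V a).le_max' _ (Finset.mem_insert_self _ _), (V a).max'_le _ _ fun x hx => ?_⟩
    rcases Finset.mem_insert.1 hx with rfl | hx
    · linarith
    · obtain ⟨b, hb, rfl⟩ := Finset.mem_image.1 hx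
      exact (abs_le.1 (hFC b (Finset.mem_filter.1 hb).1)).2
  · refine le_antisymm ((V (r b)).max'_le _ _ fun x hx => ?_) ((V (r b)).le_max' _ ?_)
    · rcases Finset.mem_insert.1 hx with rfl | hx
      · exact (abs_le.1 (hFC b hb)).1
      · obtain ⟨b', hb', rfl⟩ := Finset.mem_image.1 hx
        exact hF b' (Finset.mem_filter.1 hb').1 b hb (Finset.mem_filter.1 hb').2
    · exact Finset.mem_insert_of_mem (Finset.mem_image_of_mem F (Finset.mem_filter.2 ⟨hb, le_rfl⟩))

section ConditionalStep

variable {Ω : Type*} [MeasurableSpace Ω] {n : ℕ}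

def CondMarginalDependsOnlyOn (μ : Measure Ω) (T X : Ω → Fin n → ℝ) (I : Finset (Fin n)) :
    Prop :=
  ∀ s : Fin n → ℝ, μ {ω | T ω = s} ≠ 0 →
    Measure.map (fun ω (i : {i : Fin n // i ∈ I}) => X ω i.1) (μ[|{ω | T ω = s}])
      = Measure.map (fun ω (i : {i : Fin n // i ∈ I}) => X ω i.1)
          (μ[|{ω | ∀ i ∈ I, T ω i = s i}])

def CondMarginalStochMono (μ : Measure Ω) (T X : Ω → Fin n → ℝ) (I : Finset (Fin n)) : Prop :=
  ∀ s s' : Fin n → ℝ, (∀ i ∈ I, s i ≤ s' i) →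
    μ {ω | ∀ i ∈ I, T ω i = s i} ≠ 0 → μ {ω | ∀ i ∈ I, T ω i = s' i} ≠ 0 →
    ∀ φ : ({i : Fin n // i ∈ I} → ℝ) → ℝ, Monotone φ → (∃ C, ∀ v, |φ v| ≤ C) →
      ∫ ω, φ (fun i => X ω i.1) ∂(μ[|{ω | ∀ i ∈ I, T ω i = s i}])
        ≤ ∫ ω, φ (fun i => X ω i.1) ∂(μ[|{ω | ∀ i ∈ I, T ω i = s' i}])

variable {μ : Measure Ω} [IsProbabilityMeasure μ] {T X : Ω → Fin n → ℝ}

theorem exists_monotone_integral_cond_eq (hTfin : (Set.range T).Finite)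
    (hX : Measurable X) (hXfin : (Set.range X).Finite) {A : Finset (Fin n)}
    (hdep : CondMarginalDependsOnlyOn μ T X A) (hmono : CondMarginalStochMono μ T X A)
    {ψ : ({i : Fin n // i ∈ A} → ℝ) → ℝ} (hψ : Monotone ψ) {C : ℝ} (hC : ∀ v, |ψ v| ≤ C) :
    ∃ g : ({i : Fin n // i ∈ A} → ℝ) → ℝ, Monotone g ∧ (∀ v, |g v| ≤ C) ∧
      ∀ s, μ {ω | T ω = s} ≠ 0 →
        ∫ ω, ψ (fun i => s i.1 + X ω i.1) ∂μ[|{ω | T ω = s}] = g fun i => s i.1 := by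
  let F : (Fin n → ℝ) → ℝ := fun s =>
    ∫ ω, ψ (fun i => s i.1 + X ω i.1) ∂μ[|{ω | ∀ i ∈ A, T ω i = s i}]
  let P := hTfin.toFinset.filter fun s => μ {ω | T ω = s} ≠ 0
  have hP : ∀ s ∈ P, μ {ω | ∀ i ∈ A, T ω i = s i} ≠ 0 := fun s hs h0 =>
    (Finset.mem_filter.1 hs).2 (measure_mono_null
      (show {ω | T ω = s} ⊆ {ω | ∀ i ∈ A, T ω i = s i} from fun ω hω i _ => congrFun hω i) h0)
  have hFC : ∀ s ∈ P, |F s| ≤ C := fun s hs => by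
    have := cond_isProbabilityMeasure (μ := μ) (hP s hs)
    simpa using norm_integral_le_of_norm_le_const
      (μ := μ[|{ω | ∀ i ∈ A, T ω i = s i}]) (f := fun ω => ψ fun i => s i.1 + X ω i.1)
      (.of_forall fun ω => hC _)
  have hFmono : ∀ s ∈ P, ∀ s' ∈ P, (fun i : A => s i.1) ≤ (fun i => s' i.1) → F s ≤ F s' :=
    fun s hs s' hs' hss' => calc
      F s ≤ ∫ ω, ψ (fun i => s' i.1 + X ω i.1) ∂μ[|{ω | ∀ i ∈ A, T ω i = s i}] :=
          integral_mono (integrable_comp_of_finite_range hX hXfin fun x => ψ fun i => s i.1 + x i)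
            (integrable_comp_of_finite_range hX hXfin fun x => ψ fun i => s' i.1 + x i)
            fun ω => hψ fun i => add_le_add_left (hss' i) _
      _ ≤ F s' := hmono s s' (fun i hi => hss' ⟨i, hi⟩) (hP s hs) (hP s' hs')
          (fun v => ψ fun i => s' i.1 + v i)
          (fun v v' hv => hψ fun i => add_le_add_right (hv i) _) ⟨C, fun v => hC _⟩
  obtain ⟨g, hg, hgC, hgF⟩ := exists_monotone_bounded_extension (fun s (i : A) => s i.1) P F
    ((abs_nonneg _).trans (hC 0)) hFC hFmono
  refine ⟨g, hg, hgC, fun s hs => ?_⟩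
  obtain ⟨ω, hω⟩ := nonempty_of_measure_ne_zero hs
  rw [hgF s (Finset.mem_filter.2 ⟨hTfin.mem_toFinset.2 ⟨ω, hω⟩, hs⟩)]
  have hXA : Measurable fun ω (i : A) => X ω i.1 := by fun_prop
  have hXAfin : (Set.range fun ω (i : A) => X ω i.1).Finite := by
    rw [Set.range_comp' (fun x (i : A) => x i.1) X]
    exact hXfin.image _
  exact integral_comp_eq_of_map_eq hXA hXAfin (hdep s hs) fun v => ψ fun i => s i.1 + v i

theorem integral_add_eq_of_integral_cond_fiber (hT : Measurable T) (hTfin : (Set.range T).Finite)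
    (hX : Measurable X) (hXfin : (Set.range X).Finite) {A : Finset (Fin n)}
    {ψ g : ({i : Fin n // i ∈ A} → ℝ) → ℝ}
    (hg : ∀ s, μ {ω | T ω = s} ≠ 0 →
      ∫ ω, ψ (fun i => s i.1 + X ω i.1) ∂μ[|{ω | T ω = s}] = g fun i => s i.1) :
    ∫ ω, ψ (fun i => (T + X) ω i.1) ∂μ = ∫ ω, g (fun i => T ω i.1) ∂μ :=
  integral_eq_integral_of_cond_fiber hT hTfin
    (f := fun t ω => ψ fun i => t i.1 + X ω i.1) (g := fun t _ => g fun i => t i.1)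
    (integrable_comp_of_finite_range (hT.add hX) (hTfin.range_add hXfin) fun x => ψ fun i => x i.1)
    (integrable_comp_of_finite_range hT hTfin fun t => g fun i => t i.1) fun s hs => by
      have := cond_isProbabilityMeasure (μ := μ) hs
      rw [integral_const, probReal_univ, one_smul]
      exact hg s hs

theorem IsNA.add_of_cond (hT : Measurable T) (hTfin : (Set.range T).Finite) (hX : Measurable X)
    (hXfin : (Set.range X).Finite) (hTNA : IsNA μ T)
    (hNA : ∀ s, μ {ω | T ω = s} ≠ 0 → IsNA (μ[|{ω | T ω = s}]) X)
    (hdep : ∀ I, CondMarginalDependsOnlyOn μ T X I) (hmono : ∀ I, CondMarginalStochMono μ T X I) :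
    IsNA μ (T + X) := by
  intro A₁ A₂ hA ψ₁ ψ₂ hψ₁ hψ₂ ⟨C₁, hC₁⟩ ⟨C₂, hC₂⟩
  obtain ⟨g₁, hg₁, hg₁C, hg₁T⟩ :=
    exists_monotone_integral_cond_eq hTfin hX hXfin (hdep A₁) (hmono A₁) hψ₁ hC₁
  obtain ⟨g₂, hg₂, hg₂C, hg₂T⟩ :=
    exists_monotone_integral_cond_eq hTfin hX hXfin (hdep A₂) (hmono A₂) hψ₂ hC₂
  calc ∫ ω, (ψ₁ fun i => (T + X) ω i.1) * (ψ₂ fun i => (T + X) ω i.1) ∂μ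
      ≤ ∫ ω, g₁ (fun i => T ω i.1) * g₂ (fun i => T ω i.1) ∂μ :=
        integral_le_integral_of_cond_fiber hT hTfin
          (f := fun t ω => (ψ₁ fun i => t i.1 + X ω i.1) * (ψ₂ fun i => t i.1 + X ω i.1))
          (g := fun t _ => g₁ (fun i => t i.1) * g₂ (fun i => t i.1))
          (integrable_comp_of_finite_range (hT.add hX) (hTfin.range_add hXfin)
            fun x => (ψ₁ fun i => x i.1) * (ψ₂ fun i => x i.1))
          (integrable_comp_of_finite_range hT hTfin
            fun t => g₁ (fun i => t i.1) * g₂ (fun i => t i.1)) fun s hs => by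
            have := cond_isProbabilityMeasure (μ := μ) hs
            rw [integral_const, probReal_univ, one_smul, ← hg₁T s hs, ← hg₂T s hs]
            exact hNA s hs A₁ A₂ hA (fun v => ψ₁ fun i => s i.1 + v i)
              (fun v => ψ₂ fun i => s i.1 + v i)
              (fun v v' hv => hψ₁ fun i => add_le_add_right (hv i) _)
              (fun v v' hv => hψ₂ fun i => add_le_add_right (hv i) _)
              ⟨C₁, fun _ => hC₁ _⟩ ⟨C₂, fun _ => hC₂ _⟩
    _ ≤ (∫ ω, g₁ (fun i => T ω i.1) ∂μ) * ∫ ω, g₂ (fun i => T ω i.1) ∂μ :=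
        hTNA A₁ A₂ hA g₁ g₂ hg₁ hg₂ ⟨C₁, hg₁C⟩ ⟨C₂, hg₂C⟩
    _ = _ := by
        rw [integral_add_eq_of_integral_cond_fiber hT hTfin hX hXfin hg₁T,
          integral_add_eq_of_integral_cond_fiber hT hTfin hX hXfin hg₂T]

end ConditionalStep

theorem isNA_const {Ω : Type*} [MeasurableSpace Ω] (μ : Measure Ω) [IsProbabilityMeasure μ]
    {n : ℕ} (c : Fin n → ℝ) : IsNA μ fun _ => c := by
  intro A₁ A₂ _ ψ₁ ψ₂ _ _ _ _
  simp

/-- partial sums `S^(k)` of finitely-valued random vectors are NA,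
provided (i) each `X^(k)` is conditionally NA given `S^(k-1)`, (ii) the conditional
law of `X_I^(k)` given `S^(k-1)` depends only on `S_I^(k-1)`, and (iii) the
conditional law of `X_I^(k)` given `S_I^(k-1) = s_I` is stochastically increasing
in `s_I`. -/
theorem partial_sums_NA {Ω : Type*} [MeasurableSpace Ω] (μ : Measure Ω)
    [IsProbabilityMeasure μ] (n m : ℕ) (X : ℕ → Ω → Fin n → ℝ)
    (hXmeas : ∀ k, Measurable (X k)) (hXfin : ∀ k, (Set.range (X k)).Finite)
    (S : ℕ → Ω → Fin n → ℝ)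
    (hS : ∀ k ω i, S k ω i = ∑ ν ∈ Finset.Icc 1 k, X ν ω i)
    -- (i) conditional negative association
    (hNA : ∀ k ∈ Finset.Icc 1 m, ∀ s : Fin n → ℝ,
      μ {ω | S (k - 1) ω = s} ≠ 0 → IsNA (μ[|{ω | S (k - 1) ω = s}]) (X k))
    -- (ii) the conditional law of `X_I^(k)` given `S^(k-1)` depends only on `S_I^(k-1)`
    (hdep : ∀ k ∈ Finset.Icc 1 m, ∀ I : Finset (Fin n), ∀ s : Fin n → ℝ,
      μ {ω | S (k - 1) ω = s} ≠ 0 →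
      Measure.map (fun ω (i : {i : Fin n // i ∈ I}) => X k ω i.1)
          (μ[|{ω | S (k - 1) ω = s}])
        = Measure.map (fun ω (i : {i : Fin n // i ∈ I}) => X k ω i.1)
          (μ[|{ω | ∀ i ∈ I, S (k - 1) ω i = s i}]))
    -- (iii) conditional stochastic monotonicity
    (hsi : ∀ k ∈ Finset.Icc 1 m, ∀ I : Finset (Fin n), ∀ s s' : Fin n → ℝ,
      (∀ i ∈ I, s i ≤ s' i) →
      μ {ω | ∀ i ∈ I, S (k - 1) ω i = s i} ≠ 0 →
      μ {ω | ∀ i ∈ I, S (k - 1) ω i = s' i} ≠ 0 →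
      ∀ φ : ({i : Fin n // i ∈ I} → ℝ) → ℝ, Monotone φ → (∃ C, ∀ v, |φ v| ≤ C) →
        ∫ ω, φ (fun i => X k ω i.1) ∂(μ[|{ω | ∀ i ∈ I, S (k - 1) ω i = s i}])
          ≤ ∫ ω, φ (fun i => X k ω i.1) ∂(μ[|{ω | ∀ i ∈ I, S (k - 1) ω i = s' i}])) :
    ∀ k ∈ Finset.Icc 1 m, IsNA μ (S k) := by
  have hS0 : S 0 = 0 := by
    funext ω i
    simp [hS]
  have hSsucc : ∀ k, S (k + 1) = S k + X (k + 1) := fun k => by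
    funext ω i
    simp [hS, Finset.sum_Icc_succ_top]
  have hSfin : ∀ k, Measurable (S k) ∧ (Set.range (S k)).Finite := by
    intro k
    induction k with
    | zero => exact hS0 ▸ ⟨measurable_const, (Set.finite_singleton 0).subset Set.range_const_subset⟩
    | succ k ih =>
      rw [hSsucc]
      exact ⟨ih.1.add (hXmeas _), Set.Finite.range_add ih.2 (hXfin _)⟩
  suffices ∀ k ≤ m, IsNA μ (S k) from fun k hk => this k (Finset.mem_Icc.1 hk).2
  intro k hk
  induction k with
  | zero => exact hS0 ▸ isNA_const μ 0
  | succ k ih =>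
    have hk' : k + 1 ∈ Finset.Icc 1 m := Finset.mem_Icc.2 ⟨by omega, hk⟩
    rw [hSsucc]
    exact (ih (by omega)).add_of_cond (hSfin k).1 (hSfin k).2 (hXmeas _) (hXfin _)
      (hNA _ hk') (hdep _ hk') (hsi _ hk')
end
end
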